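/- arXiv:2009.04349 — 2 statements merged into one kernel-verified Lean document; each statement's English description precedes it below -/
import Mathlib

section
/- Let F be a monic polynomial of smallest degree in S_α = {f ∈ K[x] : ν_Q(f) < ν(f) for all Q ∈ Ψ_α}. Then F is a key polynomial for ν of degree greater than α; moreover for every nonzero g with deg(g) < deg(F) there exists Q ∈ Ψ_α with ε(g) ≤ ε(Q). -/
open Polynomial

variable {K : Type*} [Field K]

/-- `ν` is a (rank one, real-valued) valuation on `K[x]`, specified on nonzero
polynomials. -/
def IsVal {K : Type*} [Field K] (ν : Polynomial K → ℝ) : Prop :=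
  (∀ f g : Polynomial K, f ≠ 0 → g ≠ 0 → ν (f * g) = ν f + ν g) ∧
  (∀ f g : Polynomial K, f ≠ 0 → g ≠ 0 → f + g ≠ 0 → min (ν f) (ν g) ≤ ν (f + g))

/-- The level `ε(f)` of a nonzero polynomial: the maximum of
`(ν f - ν (∂_b f))/b` over `b ≥ 1` (with `∂_b` the Hasse derivatives). -/
noncomputable def eps {K : Type*} [Field K] (ν : Polynomial K → ℝ) (f : Polynomial K) : ℝ :=
  sSup {r : ℝ | ∃ b : ℕ, 1 ≤ b ∧ hasseDeriv b f ≠ 0 ∧ r = (ν f - ν (hasseDeriv b f)) / b}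

/-- The set `I(f)` of indices where the bound `ν(∂_b f) ≥ ν f - b ε(f)` is an equality. -/
def Iset {K : Type*} [Field K] (ν : Polynomial K → ℝ) (f : Polynomial K) : Set ℕ :=
  {b | 1 ≤ b ∧ hasseDeriv b f ≠ 0 ∧ ν (hasseDeriv b f) = ν f - b * eps ν f}

/-- `Q` is a key polynomial for `ν`. -/
def IsKeyPol {K : Type*} [Field K] (ν : Polynomial K → ℝ) (Q : Polynomial K) : Prop :=
  Q.Monic ∧ 0 < Q.natDegree ∧
    ∀ f : Polynomial K, f ≠ 0 → f.natDegree < Q.natDegree → eps ν f < eps ν Q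

/-- The coefficients of the `Q`-expansion of `f`:  `f = Σ i, qc Q f i * Q ^ i`
with `deg (qc Q f i) < deg Q`. -/
noncomputable def qc {K : Type*} [Field K] (Q : Polynomial K) : Polynomial K → ℕ → Polynomial K
  | f, 0 => f %ₘ Q
  | f, (i + 1) => qc Q (f /ₘ Q) i

/-- The degree of the `Q`-expansion of `f`. -/
def degQ {K : Type*} [Field K] (Q f : Polynomial K) : ℕ := f.natDegree / Q.natDegree

/-- The truncation `ν_Q(f) = min_i ν (f_i Q^i)` of `ν` at `Q`. -/
noncomputable def nuQ {K : Type*} [Field K] (ν : Polynomial K → ℝ) (Q f : Polynomial K) : ℝ :=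
  sInf {r : ℝ | ∃ i : ℕ, qc Q f i ≠ 0 ∧ r = ν (qc Q f i * Q ^ i)}

/-- The set `S_Q(f)` of indices attaining the minimum in `ν_Q(f)`. -/
def SQ {K : Type*} [Field K] (ν : Polynomial K → ℝ) (Q f : Polynomial K) : Set ℕ :=
  {i | qc Q f i ≠ 0 ∧ ν (qc Q f i * Q ^ i) = nuQ ν Q f}

/-- `δ_Q(f) = max S_Q(f)`. -/
noncomputable def deltaQ {K : Type*} [Field K] (ν : Polynomial K → ℝ) (Q f : Polynomial K) : ℕ :=
  sSup (SQ ν Q f)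

/-- The set `Ψ_α` of key polynomials for `ν` of degree `α`. -/
def Psi {K : Type*} [Field K] (ν : Polynomial K → ℝ) (α : ℕ) : Set (Polynomial K) :=
  {Q | IsKeyPol ν Q ∧ Q.natDegree = α}

/-- The set `S_α` of (nonzero) polynomials whose value is not computed by any
truncation at a key polynomial of degree `α`. -/
def Slim {K : Type*} [Field K] (ν : Polynomial K → ℝ) (α : ℕ) : Set (Polynomial K) :=
  {f | f ≠ 0 ∧ ∀ Q ∈ Psi ν α, nuQ ν Q f < ν f}

/-- `p` is the characteristic exponent of the residue field of `ν`: either `p = 1`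
and all nonzero natural numbers have value `0`, or `p` is a prime, `p` has
positive value (or is `0` in `K`), and naturals prime to `p` have value `0`. -/
def CharExp {K : Type*} [Field K] (ν : Polynomial K → ℝ) (p : ℕ) : Prop :=
  (p = 1 ∧ ∀ n : ℕ, (n : Polynomial K) ≠ 0 → ν (n : Polynomial K) = 0) ∨
  (p.Prime ∧ ((p : Polynomial K) = 0 ∨ 0 < ν (p : Polynomial K)) ∧
    ∀ n : ℕ, ¬ p ∣ n → ν (n : Polynomial K) = 0)

namespace KP
variable {ν : Polynomial K → ℝ} (hν : IsVal ν)

theorem v_one (hν : IsVal ν) : ν 1 = 0 := by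
  have := hν.1 1 1 one_ne_zero one_ne_zero; simp at this; linarith

theorem v_neg (hν : IsVal ν) (f : Polynomial K) (hf : f ≠ 0) : ν (-f) = ν f := by
  have h1 : ν ((-1 : Polynomial K) * (-1)) = ν (-1) + ν (-1) := hν.1 _ _ (by simp) (by simp)
  simp only [neg_mul, one_mul, neg_neg, v_one hν] at h1
  have h2 : ν ((-1 : Polynomial K) * f) = ν (-1) + ν f := hν.1 _ _ (by simp) hf
  rw [neg_mul, one_mul] at h2
  rw [h2]; linarith

theorem v_pow (hν : IsVal ν) (Q : Polynomial K) (hQ : Q ≠ 0) (i : ℕ) :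
    ν (Q ^ i) = i * ν Q := by
  induction i with
  | zero => simp [v_one hν]
  | succ n ih =>
    rw [pow_succ, hν.1 _ _ (pow_ne_zero _ hQ) hQ, ih]; push_cast; ring

/-- `h` is zero or has value at least `X`. -/
def NuGe (ν : Polynomial K → ℝ) (X : ℝ) (h : Polynomial K) : Prop := h = 0 ∨ X ≤ ν h

/-- `h` is zero or has value greater than `X`. -/
def NuGt (ν : Polynomial K → ℝ) (X : ℝ) (h : Polynomial K) : Prop := h = 0 ∨ X < ν h

theorem NuGt.nuGe {X : ℝ} {h : Polynomial K} (H : NuGt ν X h) : NuGe ν X h :=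
  H.imp id le_of_lt

theorem NuGe.mono {X Y : ℝ} {h : Polynomial K} (H : NuGe ν X h) (hxy : Y ≤ X) : NuGe ν Y h :=
  H.imp id (le_trans hxy)

theorem NuGt.mono {X Y : ℝ} {h : Polynomial K} (H : NuGt ν X h) (hxy : Y ≤ X) : NuGt ν Y h :=
  H.imp id (lt_of_le_of_lt hxy)

theorem NuGe.of_gt {X Y : ℝ} {h : Polynomial K} (H : NuGe ν X h) (hxy : Y < X) : NuGt ν Y h :=
  H.imp id (lt_of_lt_of_le hxy)

theorem NuGe.add (hν : IsVal ν) {X : ℝ} {f g : Polynomial K}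
    (hf : NuGe ν X f) (hg : NuGe ν X g) : NuGe ν X (f + g) := by
  by_cases hf0 : f = 0; · subst hf0; simpa using hg
  by_cases hg0 : g = 0; · subst hg0; simpa using hf
  replace hf := hf.resolve_left hf0
  replace hg := hg.resolve_left hg0
  by_cases h0 : f + g = 0
  · exact Or.inl h0
  exact Or.inr (le_trans (le_min hf hg) (hν.2 f g hf0 hg0 h0))

theorem NuGt.add (hν : IsVal ν) {X : ℝ} {f g : Polynomial K}
    (hf : NuGt ν X f) (hg : NuGt ν X g) : NuGt ν X (f + g) := by
  by_cases hf0 : f = 0; · subst hf0; simpa using hg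
  by_cases hg0 : g = 0; · subst hg0; simpa using hf
  replace hf := hf.resolve_left hf0
  replace hg := hg.resolve_left hg0
  by_cases h0 : f + g = 0
  · exact Or.inl h0
  exact Or.inr (lt_of_lt_of_le (lt_min hf hg) (hν.2 f g hf0 hg0 h0))

theorem NuGe.sum (hν : IsVal ν) {X : ℝ} {ι : Type*} (s : Finset ι) (F : ι → Polynomial K)
    (h : ∀ i ∈ s, NuGe ν X (F i)) : NuGe ν X (∑ i ∈ s, F i) := by
  classical
  induction s using Finset.induction_on with
  | empty => exact Or.inl (by simp)
  | insert _ _ hx ih =>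
    rw [Finset.sum_insert hx]
    exact NuGe.add hν (h _ (Finset.mem_insert_self _ _))
      (ih fun i hi => h i (Finset.mem_insert_of_mem hi))

theorem NuGt.sum (hν : IsVal ν) {X : ℝ} {ι : Type*} (s : Finset ι) (F : ι → Polynomial K)
    (h : ∀ i ∈ s, NuGt ν X (F i)) : NuGt ν X (∑ i ∈ s, F i) := by
  classical
  induction s using Finset.induction_on with
  | empty => exact Or.inl (by simp)
  | insert _ _ hx ih =>
    rw [Finset.sum_insert hx]
    exact NuGt.add hν (h _ (Finset.mem_insert_self _ _))
      (ih fun i hi => h i (Finset.mem_insert_of_mem hi))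

theorem NuGe.mul (hν : IsVal ν) {X Y : ℝ} {f g : Polynomial K}
    (hf : NuGe ν X f) (hg : NuGe ν Y g) : NuGe ν (X + Y) (f * g) := by
  by_cases hf0 : f = 0; · exact Or.inl (by simp [hf0])
  by_cases hg0 : g = 0; · exact Or.inl (by simp [hg0])
  refine Or.inr ?_
  rw [hν.1 f g hf0 hg0]
  exact add_le_add (hf.resolve_left hf0) (hg.resolve_left hg0)

theorem NuGt.mul_ge (hν : IsVal ν) {X Y : ℝ} {f g : Polynomial K}
    (hf : NuGt ν X f) (hg : NuGe ν Y g) : NuGt ν (X + Y) (f * g) := by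
  by_cases hf0 : f = 0; · exact Or.inl (by simp [hf0])
  by_cases hg0 : g = 0; · exact Or.inl (by simp [hg0])
  refine Or.inr ?_
  rw [hν.1 f g hf0 hg0]
  exact add_lt_add_of_lt_of_le (hf.resolve_left hf0) (hg.resolve_left hg0)

theorem NuGe.mul_gt (hν : IsVal ν) {X Y : ℝ} {f g : Polynomial K}
    (hf : NuGe ν X f) (hg : NuGt ν Y g) : NuGt ν (X + Y) (f * g) := by
  by_cases hf0 : f = 0; · exact Or.inl (by simp [hf0])
  by_cases hg0 : g = 0; · exact Or.inl (by simp [hg0])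
  refine Or.inr ?_
  rw [hν.1 f g hf0 hg0]
  exact add_lt_add_of_le_of_lt (hf.resolve_left hf0) (hg.resolve_left hg0)

theorem exact_mul_gt (hν : IsVal ν) {X Y : ℝ} {f g : Polynomial K}
    (hf0 : f ≠ 0) (hf : ν f = X) (hg : NuGt ν Y g) : NuGt ν (X + Y) (f * g) :=
  NuGe.mul_gt hν (Or.inr hf.ge) hg

/-- dominant-term lemma: if `ν f = X` exactly and `g` is zero or of bigger value,
then `f + g` is nonzero with value exactly `X`. -/
theorem v_add_eq (hν : IsVal ν) {X : ℝ} {f g : Polynomial K}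
    (hf0 : f ≠ 0) (hf : ν f = X) (hg : NuGt ν X g) : f + g ≠ 0 ∧ ν (f + g) = X := by
  by_cases hg0 : g = 0
  · subst hg0; simpa using ⟨hf0, hf⟩
  replace hg := hg.resolve_left hg0
  have hne : f + g ≠ 0 := by
    intro h
    have hgf : g = -f := by rw [add_comm] at h; exact eq_neg_of_add_eq_zero_left h
    rw [hgf, v_neg hν f hf0, hf] at hg
    exact lt_irrefl _ hg
  refine ⟨hne, le_antisymm ?_ ?_⟩
  · -- ν (f+g) ≤ X : f = (f+g) + (-g)
    by_contra hlt
    push_neg at hlt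
    have h2 : min (ν (f + g)) (ν (-g)) ≤ ν ((f + g) + -g) := by
      refine hν.2 _ _ hne (by simpa using hg0) ?_
      simpa using hf0
    rw [v_neg hν g hg0] at h2
    simp only [add_neg_cancel_right] at h2
    rw [hf] at h2
    rcases min_le_iff.mp h2 with h | h <;> linarith
  · calc X = min (ν f) (ν g) := by rw [hf]; exact (min_eq_left (by linarith [hg, hf.le] )).symm
      _ ≤ ν (f + g) := hν.2 f g hf0 hg0 hne



variable {ν : Polynomial K → ℝ}

def epsSet (ν : Polynomial K → ℝ) (f : Polynomial K) : Set ℝ :=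
  {r : ℝ | ∃ b : ℕ, 1 ≤ b ∧ hasseDeriv b f ≠ 0 ∧ r = (ν f - ν (hasseDeriv b f)) / b}

theorem eps_def (f : Polynomial K) : eps ν f = sSup (epsSet ν f) := rfl

theorem epsSet_finite (f : Polynomial K) : (epsSet ν f).Finite := by
  have : epsSet ν f ⊆ (fun b : ℕ => (ν f - ν (hasseDeriv b f)) / b) '' (Set.Iic f.natDegree) := by
    rintro r ⟨b, hb1, hb2, rfl⟩
    refine ⟨b, ?_, rfl⟩
    simp only [Set.mem_Iic]
    by_contra h
    exact hb2 (hasseDeriv_eq_zero_of_lt_natDegree f b (by omega))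
  exact Set.Finite.subset ((Set.finite_Iic _).image _) this

theorem eps_ge (f : Polynomial K) {b : ℕ} (hb : 1 ≤ b) (h : hasseDeriv b f ≠ 0) :
    (ν f - ν (hasseDeriv b f)) / b ≤ eps ν f :=
  le_csSup (epsSet_finite f).bddAbove ⟨b, hb, h, rfl⟩

theorem hasse_ge (f : Polynomial K) {b : ℕ} (hb : 1 ≤ b) (h : hasseDeriv b f ≠ 0) :
    ν f - b * eps ν f ≤ ν (hasseDeriv b f) := by
  have := eps_ge (ν := ν) f hb h
  have hb' : (0:ℝ) < b := by exact_mod_cast hb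
  rw [div_le_iff₀ hb'] at this
  linarith

theorem eps_const (c : K) : eps ν (C c) = 0 := by
  rw [eps_def]
  convert Real.sSup_empty
  rw [Set.eq_empty_iff_forall_notMem]
  rintro r ⟨b, hb1, hb2, _⟩
  exact hb2 (hasseDeriv_eq_zero_of_lt_natDegree _ b (by simp; omega))

theorem epsSet_nonempty {f : Polynomial K} (hf : f ≠ 0) (hd : 1 ≤ f.natDegree) :
    (epsSet ν f).Nonempty := by
  refine ⟨_, f.natDegree, hd, ?_, rfl⟩
  intro h
  have := congrArg (fun p => Polynomial.coeff p 0) h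
  simp only [hasseDeriv_coeff, zero_add, Nat.choose_self, Nat.cast_one, one_mul,
    coeff_zero] at this
  exact (leadingCoeff_ne_zero.mpr hf) this

theorem eps_mem {f : Polynomial K} (hf : f ≠ 0) (hd : 1 ≤ f.natDegree) :
    ∃ b : ℕ, 1 ≤ b ∧ hasseDeriv b f ≠ 0 ∧ eps ν f = (ν f - ν (hasseDeriv b f)) / b := by
  have := (epsSet_nonempty (ν := ν) hf hd).csSup_mem (epsSet_finite f)
  exact this

theorem Iset_nonempty {f : Polynomial K} (hf : f ≠ 0) (hd : 1 ≤ f.natDegree) :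
    (Iset ν f).Nonempty := by
  obtain ⟨b, hb1, hb2, hb3⟩ := eps_mem (ν := ν) hf hd
  refine ⟨b, hb1, hb2, ?_⟩
  have hb' : (0:ℝ) < b := by exact_mod_cast hb1
  field_simp at hb3
  linarith

/-- the maximal element of `Iset`. -/
theorem exists_max_Iset {f : Polynomial K} (hf : f ≠ 0) (hd : 1 ≤ f.natDegree) :
    ∃ b ∈ Iset ν f, ∀ c ∈ Iset ν f, c ≤ b := by
  have hbdd : BddAbove (Iset ν f) := by
    refine ⟨f.natDegree, fun c hc => ?_⟩
    by_contra h
    exact hc.2.1 (hasseDeriv_eq_zero_of_lt_natDegree f c (by omega))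
  refine ⟨sSup (Iset ν f), Nat.sSup_mem (Iset_nonempty hf hd) hbdd, fun c hc => le_csSup hbdd hc⟩

theorem hasse_gt_of_not_mem_Iset (f : Polynomial K) {b : ℕ} (hb : 1 ≤ b)
    (h : hasseDeriv b f ≠ 0) (hI : b ∉ Iset ν f) :
    ν f - b * eps ν f < ν (hasseDeriv b f) := by
  rcases lt_or_eq_of_le (hasse_ge (ν := ν) f hb h) with h' | h'
  · exact h'
  · exact absurd ⟨hb, h, h'.symm⟩ hI



variable {Q : Polynomial K}

theorem qc_zero_left (Q : Polynomial K) : ∀ i, qc Q 0 i = 0 := by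
  intro i
  induction i with
  | zero => simp [qc]
  | succ n ih => simp only [qc, zero_divByMonic]; exact ih

theorem qc_is_mod (Q f : Polynomial K) (i : ℕ) : ∃ g, qc Q f i = g %ₘ Q := by
  induction i generalizing f with
  | zero => exact ⟨f, rfl⟩
  | succ n ih => exact ih (f /ₘ Q)

theorem qc_natDegree_lt (hQ : Q.Monic) (f : Polynomial K) (i : ℕ)
    (h : qc Q f i ≠ 0) : (qc Q f i).natDegree < Q.natDegree := by
  obtain ⟨g, hg⟩ := qc_is_mod Q f i
  rw [hg] at h ⊢
  exact natDegree_lt_natDegree h (degree_modByMonic_lt g hQ)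

theorem qc_eq_zero (hQ : Q.Monic) (hQd : 1 ≤ Q.natDegree) (f : Polynomial K) (i : ℕ)
    (h : f.natDegree + 1 ≤ i) : qc Q f i = 0 := by
  induction i generalizing f with
  | zero => omega
  | succ n ih =>
    show qc Q (f /ₘ Q) n = 0
    by_cases h0 : f /ₘ Q = 0
    · rw [h0]; exact qc_zero_left Q n
    have hd : (f /ₘ Q).natDegree = f.natDegree - Q.natDegree := natDegree_divByMonic f hQ
    have hge : Q.degree ≤ f.degree := by
      by_contra hlt
      exact h0 ((divByMonic_eq_zero_iff hQ).mpr (not_le.mp hlt))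
    have hf0 : f ≠ 0 := by rintro rfl; simp at h0
    have : Q.natDegree ≤ f.natDegree := natDegree_le_natDegree hge
    exact ih (f /ₘ Q) (by omega)

theorem sum_qc (hQ : Q.Monic) (hQd : 1 ≤ Q.natDegree) (f : Polynomial K) :
    f = ∑ i ∈ Finset.range (f.natDegree + 1), qc Q f i * Q ^ i := by
  suffices H : ∀ (N : ℕ) (f : Polynomial K), f.natDegree ≤ N →
      f = ∑ i ∈ Finset.range (N + 1), qc Q f i * Q ^ i by
    exact H f.natDegree f le_rfl
  intro N
  induction N with
  | zero =>
    intro f hf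
    have hQdeg : (0:WithBot ℕ) < Q.degree := by
      rw [degree_eq_natDegree hQ.ne_zero]
      exact_mod_cast hQd
    have : f.degree < Q.degree := by
      rcases eq_or_ne f 0 with rfl | h0
      · exact lt_of_le_of_lt (by simp) hQdeg
      · rw [degree_eq_natDegree h0, degree_eq_natDegree hQ.ne_zero]
        exact_mod_cast Nat.lt_of_le_of_lt hf hQd
    rw [show (0:ℕ)+1 = 1 from rfl, Finset.sum_range_one, pow_zero, mul_one]
    show f = f %ₘ Q
    exact ((modByMonic_eq_self_iff hQ).mpr this).symm
  | succ N ih =>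
    intro f hf
    rw [Finset.sum_range_succ'] -- ∑_{i<N+2} g i = ∑_{i<N+1} g (i+1) + g 0
    have hstep : f = f %ₘ Q + Q * (f /ₘ Q) := (modByMonic_add_div f Q).symm
    have hdiv : (f /ₘ Q).natDegree ≤ N := by
      by_cases h0 : f /ₘ Q = 0
      · simp [h0]
      have hd : (f /ₘ Q).natDegree = f.natDegree - Q.natDegree := natDegree_divByMonic f hQ
      omega
    calc f = f %ₘ Q + Q * (f /ₘ Q) := hstep
      _ = (∑ i ∈ Finset.range (N + 1), qc Q (f /ₘ Q) i * Q ^ i) * Q + f %ₘ Q := by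
          rw [← ih (f /ₘ Q) hdiv]; ring
      _ = (∑ i ∈ Finset.range (N + 1), qc Q f (i + 1) * Q ^ (i + 1)) + qc Q f 0 * Q ^ 0 := by
          rw [Finset.sum_mul]
          simp only [qc, pow_succ, pow_zero, mul_one, mul_assoc]


def nuQSet (ν : Polynomial K → ℝ) (Q f : Polynomial K) : Set ℝ :=
  {r : ℝ | ∃ i : ℕ, qc Q f i ≠ 0 ∧ r = ν (qc Q f i * Q ^ i)}

theorem nuQ_def (Q f : Polynomial K) : nuQ ν Q f = sInf (nuQSet ν Q f) := rfl

theorem nuQSet_finite (hQ : Q.Monic) (hQd : 1 ≤ Q.natDegree) (f : Polynomial K) :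
    (nuQSet ν Q f).Finite := by
  have : nuQSet ν Q f ⊆ (fun i : ℕ => ν (qc Q f i * Q ^ i)) '' (Set.Iic f.natDegree) := by
    rintro r ⟨i, hi, rfl⟩
    refine ⟨i, ?_, rfl⟩
    simp only [Set.mem_Iic]
    by_contra h
    exact hi (qc_eq_zero hQ hQd f i (by omega))
  exact Set.Finite.subset ((Set.finite_Iic _).image _) this

theorem nuQSet_nonempty (hQ : Q.Monic) (hQd : 1 ≤ Q.natDegree) {f : Polynomial K} (hf : f ≠ 0) :
    (nuQSet ν Q f).Nonempty := by
  by_contra h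
  rw [Set.not_nonempty_iff_eq_empty, Set.eq_empty_iff_forall_notMem] at h
  have hall : ∀ i, qc Q f i = 0 := by
    intro i
    by_contra hi
    exact h _ ⟨i, hi, rfl⟩
  have := sum_qc hQ hQd f
  simp only [hall, zero_mul, Finset.sum_const_zero] at this
  exact hf this

theorem nuQ_le (hQ : Q.Monic) (hQd : 1 ≤ Q.natDegree) (f : Polynomial K) {i : ℕ}
    (hi : qc Q f i ≠ 0) : nuQ ν Q f ≤ ν (qc Q f i * Q ^ i) :=
  csInf_le (nuQSet_finite hQ hQd f).bddBelow ⟨i, hi, rfl⟩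

theorem nuQ_mem (hQ : Q.Monic) (hQd : 1 ≤ Q.natDegree) {f : Polynomial K} (hf : f ≠ 0) :
    ∃ i, qc Q f i ≠ 0 ∧ nuQ ν Q f = ν (qc Q f i * Q ^ i) :=
  (nuQSet_nonempty hQ hQd hf).csInf_mem (nuQSet_finite hQ hQd f)

theorem nuQ_le_v (hν : IsVal ν) (hQ : Q.Monic) (hQd : 1 ≤ Q.natDegree) {f : Polynomial K}
    (hf : f ≠ 0) : nuQ ν Q f ≤ ν f := by
  have hge : NuGe ν (nuQ ν Q f)
      (∑ i ∈ Finset.range (f.natDegree + 1), qc Q f i * Q ^ i) := by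
    refine NuGe.sum hν _ _ fun i _ => ?_
    by_cases hi : qc Q f i = 0
    · exact Or.inl (by simp [hi])
    · exact Or.inr (nuQ_le hQ hQd f hi)
  rw [← sum_qc hQ hQd f] at hge
  exact hge.resolve_left hf

theorem SQ_nonempty (hQ : Q.Monic) (hQd : 1 ≤ Q.natDegree) {f : Polynomial K} (hf : f ≠ 0) :
    (SQ ν Q f).Nonempty := by
  obtain ⟨i, hi, h⟩ := nuQ_mem (ν := ν) hQ hQd hf
  exact ⟨i, hi, h.symm⟩

theorem deltaQ_spec (hQ : Q.Monic) (hQd : 1 ≤ Q.natDegree) {f : Polynomial K} (hf : f ≠ 0) :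
    deltaQ ν Q f ∈ SQ ν Q f ∧ ∀ j ∈ SQ ν Q f, j ≤ deltaQ ν Q f := by
  have hbdd : BddAbove (SQ ν Q f) := by
    refine ⟨f.natDegree, fun j hj => ?_⟩
    by_contra h
    exact hj.1 (qc_eq_zero hQ hQd f j (by omega))
  exact ⟨Nat.sSup_mem (SQ_nonempty hQ hQd hf) hbdd, fun j hj => le_csSup hbdd hj⟩

theorem eps_one : eps ν (1 : Polynomial K) = 0 := by
  have := eps_const (ν := ν) (1 : K)
  rwa [map_one] at this

section Key
variable (hν : IsVal ν) (hQkey : IsKeyPol ν Q)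

theorem key_eps_pos (hQkey : IsKeyPol ν Q) : 0 < eps ν Q := by
  have := hQkey.2.2 1 one_ne_zero (by simpa using hQkey.2.1)
  rwa [eps_one] at this

/-- weak bound for Hasse derivatives of polynomials of degree `< deg Q`. -/
theorem nuge_hasse_coeff (hQkey : IsKeyPol ν Q) {g : Polynomial K} (hg : g ≠ 0)
    (hdeg : g.natDegree < Q.natDegree) (u : ℕ) :
    NuGe ν (ν g - u * eps ν Q) (hasseDeriv u g) := by
  rcases Nat.eq_zero_or_pos u with rfl | hu
  · rw [hasseDeriv_zero']
    exact Or.inr (by simp)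
  by_cases h0 : hasseDeriv u g = 0
  · exact Or.inl h0
  refine Or.inr ?_
  have h1 := hasse_ge (ν := ν) g hu h0
  have h2 : eps ν g < eps ν Q := hQkey.2.2 g hg hdeg
  have hu' : (1:ℝ) ≤ u := by exact_mod_cast hu
  nlinarith

/-- strict bound for Hasse derivatives (order ≥ 1) of polynomials of degree `< deg Q`. -/
theorem nugt_hasse_coeff (hQkey : IsKeyPol ν Q) {g : Polynomial K} (hg : g ≠ 0)
    (hdeg : g.natDegree < Q.natDegree) {u : ℕ} (hu : 1 ≤ u) :
    NuGt ν (ν g - u * eps ν Q) (hasseDeriv u g) := by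
  by_cases h0 : hasseDeriv u g = 0
  · exact Or.inl h0
  refine Or.inr ?_
  have h1 := hasse_ge (ν := ν) g hu h0
  have h2 : eps ν g < eps ν Q := hQkey.2.2 g hg hdeg
  have hu' : (1:ℝ) ≤ u := by exact_mod_cast hu
  nlinarith

theorem nuge_hasse_Q (u : ℕ) : NuGe ν (ν Q - u * eps ν Q) (hasseDeriv u Q) := by
  rcases Nat.eq_zero_or_pos u with rfl | hu
  · rw [hasseDeriv_zero']
    exact Or.inr (by simp)
  by_cases h0 : hasseDeriv u Q = 0
  · exact Or.inl h0
  exact Or.inr (hasse_ge (ν := ν) Q hu h0)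

/-- weak bound for Hasse derivatives of powers of `Q`. -/
theorem nuge_hasse_pow (hν : IsVal ν) (hQ0 : Q ≠ 0) (i c : ℕ) :
    NuGe ν ((i:ℝ) * ν Q - (c:ℝ) * eps ν Q) (hasseDeriv c (Q ^ i)) := by
  induction i generalizing c with
  | zero =>
    rcases Nat.eq_zero_or_pos c with rfl | hc
    · rw [pow_zero, hasseDeriv_zero']
      refine Or.inr ?_
      rw [v_one hν]; norm_num
    · rw [pow_zero, hasseDeriv_apply_one c hc]
      exact Or.inl rfl
  | succ i ih =>
    rw [pow_succ, mul_comm (Q ^ i) Q, hasseDeriv_mul]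
    refine NuGe.sum hν _ _ fun uv huv => ?_
    rw [Finset.HasAntidiagonal.mem_antidiagonal] at huv
    have h1 := nuge_hasse_Q (ν := ν) (Q := Q) uv.1
    have h2 := ih uv.2
    refine (NuGe.mul hν h1 h2).mono (le_of_eq ?_)
    have hc : (c:ℝ) = uv.1 + uv.2 := by exact_mod_cast huv.symm
    push_cast
    rw [hc]; ring

section MaxI
variable {b : ℕ} (hb : b ∈ Iset ν Q) (hbmax : ∀ c ∈ Iset ν Q, c ≤ b)

theorem nugt_hasse_Q_of_gt (hb : b ∈ Iset ν Q) (hbmax : ∀ c ∈ Iset ν Q, c ≤ b)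
    {u : ℕ} (hu : b < u) : NuGt ν (ν Q - u * eps ν Q) (hasseDeriv u Q) := by
  by_cases h0 : hasseDeriv u Q = 0
  · exact Or.inl h0
  refine Or.inr (hasse_gt_of_not_mem_Iset Q (by have := hb.1; omega) h0 ?_)
  intro hmem
  exact absurd (hbmax u hmem) (by omega)

/-- strict bound for Hasse derivatives of powers of `Q`, above the critical order. -/
theorem nugt_hasse_pow (hν : IsVal ν) (hQ0 : Q ≠ 0) (hb : b ∈ Iset ν Q)
    (hbmax : ∀ c ∈ Iset ν Q, c ≤ b) (i : ℕ) :
    ∀ c : ℕ, b * i < c → NuGt ν ((i:ℝ) * ν Q - (c:ℝ) * eps ν Q) (hasseDeriv c (Q ^ i)) := by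
  induction i with
  | zero =>
    intro c hc
    rw [pow_zero, hasseDeriv_apply_one c (by omega)]
    exact Or.inl rfl
  | succ i ih =>
    intro c hc
    rw [pow_succ, mul_comm (Q ^ i) Q, hasseDeriv_mul]
    refine NuGt.sum hν _ _ fun uv huv => ?_
    rw [Finset.HasAntidiagonal.mem_antidiagonal] at huv
    have hcast : (c:ℝ) = uv.1 + uv.2 := by exact_mod_cast huv.symm
    have key : NuGt ν ((ν Q - uv.1 * eps ν Q) + ((i:ℝ) * ν Q - uv.2 * eps ν Q))
        (hasseDeriv uv.1 Q * hasseDeriv uv.2 (Q ^ i)) := by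
      rcases lt_or_ge b uv.1 with h | h
      · exact NuGt.mul_ge hν (nugt_hasse_Q_of_gt hb hbmax h) (nuge_hasse_pow hν hQ0 i uv.2)
      · have h2 : b * i < uv.2 := by
          have : b * (i + 1) < uv.1 + uv.2 := by omega
          nlinarith
        exact NuGe.mul_gt hν (nuge_hasse_Q (ν := ν) uv.1) (ih uv.2 h2)
    refine key.mono (le_of_eq ?_)
    push_cast
    rw [hcast]; ring

/-- the dominant term of `∂_{bs}(Q^s)` is `(∂_b Q)^s`. -/
theorem hasse_pow_main (hν : IsVal ν) (hQ0 : Q ≠ 0) (hb : b ∈ Iset ν Q)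
    (hbmax : ∀ c ∈ Iset ν Q, c ≤ b) (s : ℕ) :
    ∃ R : Polynomial K, hasseDeriv (b * s) (Q ^ s) = (hasseDeriv b Q) ^ s + R ∧
      NuGt ν ((s:ℝ) * ν Q - ((b * s : ℕ):ℝ) * eps ν Q) R := by
  induction s with
  | zero =>
    refine ⟨0, ?_, Or.inl rfl⟩
    simp [hasseDeriv_zero']
  | succ s ih =>
    obtain ⟨R, hR, hRgt⟩ := ih
    have hmem : ((b, b * s) : ℕ × ℕ) ∈ Finset.HasAntidiagonal.antidiagonal (b * (s + 1)) := by
      rw [Finset.HasAntidiagonal.mem_antidiagonal]; ring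
    have hsplit : hasseDeriv (b * (s + 1)) (Q ^ (s + 1)) =
        hasseDeriv b Q * hasseDeriv (b * s) (Q ^ s) +
        ∑ uv ∈ (Finset.HasAntidiagonal.antidiagonal (b * (s + 1))).erase (b, b * s),
          hasseDeriv uv.1 Q * hasseDeriv uv.2 (Q ^ s) := by
      rw [pow_succ, mul_comm (Q ^ s) Q, hasseDeriv_mul]
      exact (Finset.add_sum_erase _ _ hmem).symm
    refine ⟨hasseDeriv b Q * R +
        ∑ uv ∈ (Finset.HasAntidiagonal.antidiagonal (b * (s + 1))).erase (b, b * s),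
          hasseDeriv uv.1 Q * hasseDeriv uv.2 (Q ^ s), ?_, ?_⟩
    · rw [hsplit, hR]; ring
    · have hXeq : ((s:ℝ) + 1) * ν Q - ((b * (s + 1) : ℕ):ℝ) * eps ν Q =
          (ν Q - (b:ℝ) * eps ν Q) + ((s:ℝ) * ν Q - ((b * s : ℕ):ℝ) * eps ν Q) := by
        push_cast; ring
      refine NuGt.add hν ?_ ?_
      · have h1 : ν (hasseDeriv b Q) = ν Q - (b:ℝ) * eps ν Q := hb.2.2
        have := exact_mul_gt hν hb.2.1 h1 hRgt
        refine this.mono (le_of_eq ?_)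
        push_cast; ring
      · refine NuGt.sum hν _ _ fun uv huv => ?_
        obtain ⟨hne, hmem'⟩ := Finset.mem_erase.mp huv
        rw [Finset.HasAntidiagonal.mem_antidiagonal] at hmem'
        have key : NuGt ν ((ν Q - uv.1 * eps ν Q) + ((s:ℝ) * ν Q - uv.2 * eps ν Q))
            (hasseDeriv uv.1 Q * hasseDeriv uv.2 (Q ^ s)) := by
          rcases lt_trichotomy uv.1 b with h | h | h
          · have h2 : b * s < uv.2 := by nlinarith [hmem']
            exact NuGe.mul_gt hν (nuge_hasse_Q (ν := ν) uv.1) (nugt_hasse_pow hν hQ0 hb hbmax s uv.2 h2)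
          · exfalso
            apply hne
            have hbs : b * (s + 1) = b * s + b := by ring
            have : uv.2 = b * s := by omega
            exact Prod.ext h this
          · exact NuGt.mul_ge hν (nugt_hasse_Q_of_gt hb hbmax h) (nuge_hasse_pow hν hQ0 s uv.2)
        refine key.mono (le_of_eq ?_)
        have hcast : ((b * (s+1) : ℕ):ℝ) = uv.1 + uv.2 := by exact_mod_cast hmem'.symm
        push_cast
        push_cast at hcast
        rw [hcast]; ring

end MaxI

end Key

/-- weak bound for `∂_c (g Q^i)` with `deg g < deg Q`. -/
theorem nuge_hasse_gQpow (hν : IsVal ν) (hQkey : IsKeyPol ν Q) {g : Polynomial K}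
    (hg : g ≠ 0) (hdeg : g.natDegree < Q.natDegree) (i c : ℕ) :
    NuGe ν (ν (g * Q ^ i) - (c:ℝ) * eps ν Q) (hasseDeriv c (g * Q ^ i)) := by
  have hQ0 : Q ≠ 0 := hQkey.1.ne_zero
  have hval : ν (g * Q ^ i) = ν g + (i:ℝ) * ν Q := by
    rw [hν.1 g _ hg (pow_ne_zero i hQ0), v_pow hν Q hQ0]
  rw [hasseDeriv_mul]
  refine NuGe.sum hν _ _ fun uv huv => ?_
  rw [Finset.HasAntidiagonal.mem_antidiagonal] at huv
  have hcast : (c:ℝ) = uv.1 + uv.2 := by exact_mod_cast huv.symm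
  refine (NuGe.mul hν (nuge_hasse_coeff hQkey hg hdeg uv.1) (nuge_hasse_pow hν hQ0 i uv.2)).mono
    (le_of_eq ?_)
  rw [hval, hcast]; push_cast; ring

/-- strict bound for `∂_c (g Q^i)` when `c > b i`. -/
theorem nugt_hasse_gQpow (hν : IsVal ν) (hQkey : IsKeyPol ν Q) {b : ℕ} (hb : b ∈ Iset ν Q)
    (hbmax : ∀ c ∈ Iset ν Q, c ≤ b) {g : Polynomial K}
    (hg : g ≠ 0) (hdeg : g.natDegree < Q.natDegree) (i : ℕ) {c : ℕ} (hc : b * i < c) :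
    NuGt ν (ν (g * Q ^ i) - (c:ℝ) * eps ν Q) (hasseDeriv c (g * Q ^ i)) := by
  have hQ0 : Q ≠ 0 := hQkey.1.ne_zero
  have hval : ν (g * Q ^ i) = ν g + (i:ℝ) * ν Q := by
    rw [hν.1 g _ hg (pow_ne_zero i hQ0), v_pow hν Q hQ0]
  rw [hasseDeriv_mul]
  refine NuGt.sum hν _ _ fun uv huv => ?_
  rw [Finset.HasAntidiagonal.mem_antidiagonal] at huv
  have hcast : (c:ℝ) = uv.1 + uv.2 := by exact_mod_cast huv.symm
  have key : NuGt ν ((ν g - uv.1 * eps ν Q) + ((i:ℝ) * ν Q - uv.2 * eps ν Q))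
      (hasseDeriv uv.1 g * hasseDeriv uv.2 (Q ^ i)) := by
    rcases Nat.eq_zero_or_pos uv.1 with h1 | h1
    · have h2 : b * i < uv.2 := by omega
      have hg0 : hasseDeriv uv.1 g = g := by rw [h1, hasseDeriv_zero']
      rw [hg0]
      refine (exact_mul_gt hν hg rfl (nugt_hasse_pow hν hQ0 hb hbmax i uv.2 h2)).mono
        (le_of_eq ?_)
      rw [h1]; push_cast; ring
    · exact NuGt.mul_ge hν (nugt_hasse_coeff hQkey hg hdeg h1) (nuge_hasse_pow hν hQ0 i uv.2)
  refine key.mono (le_of_eq ?_)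
  rw [hval, hcast]; push_cast; ring

/-- the dominant term of `∂_{bs}(g Q^s)` is `g (∂_b Q)^s`. -/
theorem hasse_gQpow_main (hν : IsVal ν) (hQkey : IsKeyPol ν Q) {b : ℕ} (hb : b ∈ Iset ν Q)
    (hbmax : ∀ c ∈ Iset ν Q, c ≤ b) {g : Polynomial K}
    (hg : g ≠ 0) (hdeg : g.natDegree < Q.natDegree) (s : ℕ) :
    ∃ R : Polynomial K, hasseDeriv (b * s) (g * Q ^ s) = g * (hasseDeriv b Q) ^ s + R ∧
      NuGt ν (ν (g * Q ^ s) - ((b * s : ℕ):ℝ) * eps ν Q) R := by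
  have hQ0 : Q ≠ 0 := hQkey.1.ne_zero
  have hval : ν (g * Q ^ s) = ν g + (s:ℝ) * ν Q := by
    rw [hν.1 g _ hg (pow_ne_zero s hQ0), v_pow hν Q hQ0]
  obtain ⟨R0, hR0, hR0gt⟩ := hasse_pow_main hν hQ0 hb hbmax s
  have hmem : ((0, b * s) : ℕ × ℕ) ∈ Finset.HasAntidiagonal.antidiagonal (b * s) := by
    rw [Finset.HasAntidiagonal.mem_antidiagonal]; simp
  have hsplit : hasseDeriv (b * s) (g * Q ^ s) =
      g * hasseDeriv (b * s) (Q ^ s) +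
      ∑ uv ∈ (Finset.HasAntidiagonal.antidiagonal (b * s)).erase (0, b * s),
        hasseDeriv uv.1 g * hasseDeriv uv.2 (Q ^ s) := by
    rw [hasseDeriv_mul]
    rw [← Finset.add_sum_erase _ _ hmem, hasseDeriv_zero']
  refine ⟨g * R0 + ∑ uv ∈ (Finset.HasAntidiagonal.antidiagonal (b * s)).erase (0, b * s),
      hasseDeriv uv.1 g * hasseDeriv uv.2 (Q ^ s), ?_, ?_⟩
  · rw [hsplit, hR0]; ring
  · refine NuGt.add hν ?_ ?_
    · refine (exact_mul_gt hν hg rfl hR0gt).mono (le_of_eq ?_)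
      rw [hval]; ring
    · refine NuGt.sum hν _ _ fun uv huv => ?_
      obtain ⟨hne, hmem'⟩ := Finset.mem_erase.mp huv
      rw [Finset.HasAntidiagonal.mem_antidiagonal] at hmem'
      have h1 : 1 ≤ uv.1 := by
        rcases Nat.eq_zero_or_pos uv.1 with h | h
        · exact absurd (Prod.ext h (by omega)) hne
        · exact h
      have hcast : ((b * s : ℕ):ℝ) = uv.1 + uv.2 := by exact_mod_cast hmem'.symm
      refine (NuGt.mul_ge hν (nugt_hasse_coeff hQkey hg hdeg h1)
        (nuge_hasse_pow hν hQ0 s uv.2)).mono (le_of_eq ?_)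
      rw [hval, hcast]; push_cast; ring

/-- Lemma A: if the truncation computes the value, then `ε(f) ≤ ε(Q)`. -/
theorem eps_le_of_v_le_nuQ (hν : IsVal ν) (hQkey : IsKeyPol ν Q) {f : Polynomial K}
    (hf : f ≠ 0) (hle : ν f ≤ nuQ ν Q f) : eps ν f ≤ eps ν Q := by
  have hQ : Q.Monic := hQkey.1
  have hQd : 1 ≤ Q.natDegree := hQkey.2.1
  have claim : ∀ c : ℕ, 1 ≤ c → hasseDeriv c f ≠ 0 →
      ν f - (c:ℝ) * eps ν Q ≤ ν (hasseDeriv c f) := by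
    intro c _ h0
    have hge : NuGe ν (ν f - (c:ℝ) * eps ν Q)
        (hasseDeriv c (∑ i ∈ Finset.range (f.natDegree + 1), qc Q f i * Q ^ i)) := by
      rw [map_sum]
      refine NuGe.sum hν _ _ fun i _ => ?_
      by_cases hqc : qc Q f i = 0
      · exact Or.inl (by simp [hqc])
      refine (nuge_hasse_gQpow hν hQkey hqc (qc_natDegree_lt hQ f i hqc) i c).mono ?_
      have := nuQ_le (ν := ν) hQ hQd f hqc
      linarith
    rw [← sum_qc hQ hQd f] at hge
    exact hge.resolve_left h0
  rw [eps_def]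
  refine Real.sSup_le ?_ (le_of_lt (key_eps_pos hQkey))
  rintro r ⟨c, hc1, hc2, rfl⟩
  have hc' : (0:ℝ) < c := by exact_mod_cast hc1
  rw [div_le_iff₀ hc']
  have := claim c hc1 hc2
  linarith

/-- Lemma B: if the truncation does not compute the value, then `ε(Q) < ε(f)`. -/
theorem eps_lt_of_nuQ_lt (hν : IsVal ν) (hQkey : IsKeyPol ν Q) {f : Polynomial K}
    (hf : f ≠ 0) (hlt : nuQ ν Q f < ν f) : eps ν Q < eps ν f := by
  have hQ : Q.Monic := hQkey.1
  have hQd : 1 ≤ Q.natDegree := hQkey.2.1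
  have hQ0 : Q ≠ 0 := hQ.ne_zero
  obtain ⟨b, hb, hbmax⟩ := exists_max_Iset (ν := ν) hQ0 hQd
  set s := deltaQ ν Q f with hsdef
  obtain ⟨hsS, hsmax⟩ := deltaQ_spec (ν := ν) hQ hQd hf
  rw [← hsdef] at hsS hsmax
  have hqcs : qc Q f s ≠ 0 := hsS.1
  have hqcsv : ν (qc Q f s * Q ^ s) = nuQ ν Q f := hsS.2
  have hsdeg : s ≤ f.natDegree := by
    by_contra h
    exact hqcs (qc_eq_zero hQ hQd f s (by omega))
  have hsmem : s ∈ Finset.range (f.natDegree + 1) := Finset.mem_range.mpr (by omega)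
  -- the main computation
  obtain ⟨R, hR, hRgt⟩ := hasse_gQpow_main hν hQkey hb hbmax hqcs
    (qc_natDegree_lt hQ f s hqcs) s
  rw [hqcsv] at hRgt
  -- value of the main term
  have hdbQ : hasseDeriv b Q ≠ 0 := hb.2.1
  have hmainne : qc Q f s * (hasseDeriv b Q) ^ s ≠ 0 :=
    mul_ne_zero hqcs (pow_ne_zero s hdbQ)
  have hmainval : ν (qc Q f s * (hasseDeriv b Q) ^ s) =
      nuQ ν Q f - ((b * s : ℕ):ℝ) * eps ν Q := by
    rw [hν.1 _ _ hqcs (pow_ne_zero s hdbQ), v_pow hν _ hdbQ, hb.2.2]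
    rw [← hqcsv, hν.1 _ _ hqcs (pow_ne_zero s hQ0), v_pow hν Q hQ0]
    push_cast; ring
  -- other indices give strictly bigger terms
  have hother : ∀ i ∈ (Finset.range (f.natDegree + 1)).erase s,
      NuGt ν (nuQ ν Q f - ((b * s : ℕ):ℝ) * eps ν Q)
        (hasseDeriv (b * s) (qc Q f i * Q ^ i)) := by
    intro i hi
    obtain ⟨hine, _⟩ := Finset.mem_erase.mp hi
    by_cases hqc : qc Q f i = 0
    · exact Or.inl (by simp [hqc])
    have hdegi := qc_natDegree_lt hQ f i hqc
    by_cases hiS : i ∈ SQ ν Q f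
    · -- i < s, strict by derivative order
      have hilt : i < s := lt_of_le_of_ne (hsmax i hiS) hine
      have hb1 : 1 ≤ b := hb.1
      have hbi : b * i < b * s := by
        have h1 : b * (i + 1) ≤ b * s := Nat.mul_le_mul_left b hilt
        have h2 : b * (i + 1) = b * i + b := by ring
        omega
      refine (nugt_hasse_gQpow hν hQkey hb hbmax hqc hdegi i hbi).mono ?_
      rw [hiS.2]
    · -- value strictly bigger than the minimum
      have hgt : nuQ ν Q f < ν (qc Q f i * Q ^ i) := by
        rcases lt_or_eq_of_le (nuQ_le (ν := ν) hQ hQd f hqc) with h | h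
        · exact h
        · exact absurd ⟨hqc, h.symm⟩ hiS
      refine (nuge_hasse_gQpow hν hQkey hqc hdegi i (b * s)).of_gt (by linarith)
  -- assemble
  have hsplit : hasseDeriv (b * s) f =
      qc Q f s * (hasseDeriv b Q) ^ s + (R +
        ∑ i ∈ (Finset.range (f.natDegree + 1)).erase s,
          hasseDeriv (b * s) (qc Q f i * Q ^ i)) := by
    conv_lhs => rw [show f = ∑ i ∈ Finset.range (f.natDegree + 1), qc Q f i * Q ^ i from
      sum_qc hQ hQd f]
    rw [map_sum, ← Finset.add_sum_erase _ _ hsmem, hR]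
    ring
  have hrest : NuGt ν (nuQ ν Q f - ((b * s : ℕ):ℝ) * eps ν Q)
      (R + ∑ i ∈ (Finset.range (f.natDegree + 1)).erase s,
        hasseDeriv (b * s) (qc Q f i * Q ^ i)) :=
    NuGt.add hν hRgt (NuGt.sum hν _ _ hother)
  have hfinal : hasseDeriv (b * s) f ≠ 0 ∧
      ν (hasseDeriv (b * s) f) = nuQ ν Q f - ((b * s : ℕ):ℝ) * eps ν Q := by
    rw [hsplit]
    exact v_add_eq hν hmainne hmainval hrest
  -- s cannot be zero
  have hs1 : 1 ≤ s := by
    rcases Nat.eq_zero_or_pos s with h | h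
    · exfalso
      have := hfinal.2
      rw [h, Nat.mul_zero] at this
      rw [hasseDeriv_zero'] at this
      push_cast at this
      linarith
    · exact h
  have hbs1 : 1 ≤ b * s := by
    have := hb.1; nlinarith
  -- conclude
  have := eps_ge (ν := ν) f hbs1 hfinal.1
  rw [hfinal.2] at this
  have hbs' : (0:ℝ) < (b * s : ℕ) := by exact_mod_cast hbs1
  rw [div_le_iff₀ hbs'] at this
  nlinarith [mul_lt_mul_of_pos_right hlt hbs']

theorem qc_self {F : Polynomial K} (hF : F.Monic) (hFd : 1 ≤ F.natDegree) :
    qc F F 0 = 0 ∧ qc F F 1 = 1 ∧ ∀ i, 2 ≤ i → qc F F i = 0 := by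
  have hdeg1 : (1 : Polynomial K).degree < F.degree := by
    rw [degree_one, degree_eq_natDegree hF.ne_zero]
    exact_mod_cast hFd
  have hdiv : F /ₘ F = 1 := by
    have := mul_divByMonic_cancel_left (1 : Polynomial K) hF
    rwa [mul_one] at this
  refine ⟨?_, ?_, ?_⟩
  · show F %ₘ F = 0
    exact (modByMonic_eq_zero_iff_dvd hF).mpr dvd_rfl
  · show qc F (F /ₘ F) 0 = 1
    rw [hdiv]
    exact (modByMonic_eq_self_iff hF).mpr hdeg1
  · intro i hi
    obtain ⟨j, rfl⟩ : ∃ j, i = j + 2 := ⟨i - 2, by omega⟩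
    show qc F (F /ₘ F /ₘ F) j = 0
    rw [hdiv, (divByMonic_eq_zero_iff hF).mpr hdeg1]
    exact qc_zero_left F j

theorem nuQ_self {F : Polynomial K} (hν : IsVal ν) (hF : F.Monic) (hFd : 1 ≤ F.natDegree) :
    nuQ ν F F = ν F := by
  obtain ⟨h0, h1, h2⟩ := qc_self hF hFd
  have hset : nuQSet ν F F = {ν F} := by
    ext r
    constructor
    · rintro ⟨i, hi, rfl⟩
      match i with
      | 0 => exact absurd h0 hi
      | 1 => simp [h1]
      | (j+2) => exact absurd (h2 (j+2) (by omega)) hi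
    · rintro rfl
      exact ⟨1, by rw [h1]; exact one_ne_zero, by simp [h1]⟩
  rw [nuQ_def, hset, csInf_singleton]

end KP

/-- A monic polynomial of smallest degree in `S_α` is a key polynomial of degree
greater than `α`, and every nonzero `g` of smaller degree satisfies
`ε(g) ≤ ε(Q)` for some `Q ∈ Ψ_α`. -/
theorem successor_is_keyPol (ν : Polynomial K → ℝ) (hν : IsVal ν) (α : ℕ)
    (hne : (Psi ν α).Nonempty)
    (F : Polynomial K) (hFm : F.Monic) (hF : F ∈ Slim ν α)
    (hmin : ∀ g ∈ Slim ν α, F.natDegree ≤ g.natDegree) :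
    IsKeyPol ν F ∧ α < F.natDegree ∧
      ∀ g : Polynomial K, g ≠ 0 → g.natDegree < F.natDegree →
        ∃ Q ∈ Psi ν α, eps ν g ≤ eps ν Q := by
  obtain ⟨Q0, hQ0key, hQ0deg⟩ := hne
  have hα : 1 ≤ α := hQ0deg ▸ hQ0key.2.1
  have hF0 : F ≠ 0 := hF.1
  have hB : ∀ Q ∈ Psi ν α, eps ν Q < eps ν F := fun Q hQ =>
    KP.eps_lt_of_nuQ_lt hν hQ.1 hF0 (hF.2 Q hQ)
  have hQ0Psi : Q0 ∈ Psi ν α := ⟨hQ0key, hQ0deg⟩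
  have hdeg : α < F.natDegree := by
    by_contra h
    push_neg at h
    rcases lt_or_eq_of_le h with hlt | heq
    · exact absurd (hQ0key.2.2 F hF0 (by omega)) (not_lt.mpr (le_of_lt (hB Q0 hQ0Psi)))
    · have hFkey : IsKeyPol ν F :=
        ⟨hFm, by omega, fun g hg hgd =>
          lt_trans (hQ0key.2.2 g hg (by omega)) (hB Q0 hQ0Psi)⟩
      have := hF.2 F ⟨hFkey, heq⟩
      rw [KP.nuQ_self hν hFm (by omega)] at this
      exact lt_irrefl _ this
  have part3 : ∀ g : Polynomial K, g ≠ 0 → g.natDegree < F.natDegree →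
      ∃ Q ∈ Psi ν α, eps ν g ≤ eps ν Q := by
    intro g hg hgd
    have hgnot : g ∉ Slim ν α := fun hmem => absurd (hmin g hmem) (by omega)
    simp only [Slim, Set.mem_setOf_eq, not_and, not_forall] at hgnot
    obtain ⟨Q, hQPsi, hnle⟩ := hgnot hg
    exact ⟨Q, hQPsi, KP.eps_le_of_v_le_nuQ hν hQPsi.1 hg (not_lt.mp hnle)⟩
  refine ⟨⟨hFm, by omega, fun g hg hgd => ?_⟩, hdeg, part3⟩
  obtain ⟨Q, hQ, hle⟩ := part3 g hg hgd
  exact lt_of_le_of_lt hle (hB Q hQ)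
end

section
/- Let F be a limit key polynomial for Ψ_α (a monic polynomial of minimal degree in S_α, where Ψ_α has no maximum value). If f ∈ S_α and h ∈ K[x] satisfies ν_{Q'}(h) > ν_Q(f) for some fixed Q' ∈ Ψ_α and all Q ∈ Ψ_α, then f + h ∈ S_α. -/
open Polynomial

variable {K : Type*} [Field K]

/- ### Auxiliary lemmas -/

section AuxLemmas

variable {K : Type*} [Field K] {ν : Polynomial K → ℝ}

theorem IsVal.val_one (hν : IsVal ν) : ν 1 = 0 := by
  have h := hν.1 1 1 one_ne_zero one_ne_zero
  rw [mul_one] at h; linarith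

theorem IsVal.val_neg (hν : IsVal ν) {g : Polynomial K} (hg : g ≠ 0) : ν (-g) = ν g := by
  have h1 : ν ((-1 : Polynomial K) * (-1)) = ν (-1) + ν (-1) :=
    hν.1 _ _ (by norm_num) (by norm_num)
  rw [neg_one_mul, neg_neg] at h1
  have h2 := hν.val_one
  have h3 : ν (-1 : Polynomial K) = 0 := by linarith
  have h4 : ν ((-1 : Polynomial K) * g) = ν (-1) + ν g := hν.1 _ _ (by norm_num) hg
  rw [neg_one_mul] at h4
  rw [h4, h3, zero_add]

theorem IsVal.val_pow (hν : IsVal ν) {Q : Polynomial K} (hQ : Q ≠ 0) (n : ℕ) :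
    ν (Q ^ n) = n * ν Q := by
  induction n with
  | zero => simpa using hν.val_one
  | succ n ih =>
    rw [pow_succ, hν.1 _ _ (pow_ne_zero n hQ) hQ, ih]
    push_cast; ring

theorem IsVal.val_add_left (hν : IsVal ν) {x y : Polynomial K} (hx : x ≠ 0) (hy : y ≠ 0)
    (hlt : ν x < ν y) : x + y ≠ 0 ∧ ν (x + y) = ν x := by
  have hxy : x + y ≠ 0 := by
    intro h0
    have hyx : y = -x := eq_neg_of_add_eq_zero_right h0
    rw [hyx, hν.val_neg hx] at hlt
    exact lt_irrefl _ hlt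
  have hmin : min (ν x) (ν y) ≤ ν (x + y) := hν.2 x y hx hy hxy
  rw [min_eq_left hlt.le] at hmin
  have h2 : min (ν (x + y)) (ν (-y)) ≤ ν ((x + y) + -y) := by
    refine hν.2 _ _ hxy (neg_ne_zero.mpr hy) ?_
    rw [add_neg_cancel_right]; exact hx
  rw [add_neg_cancel_right, hν.val_neg hy] at h2
  rcases min_le_iff.mp h2 with h | h
  · exact ⟨hxy, le_antisymm h hmin⟩
  · linarith

theorem IsVal.val_sum_ge (hν : IsVal ν) {ι : Type*} (s : Finset ι)
    (u : ι → Polynomial K) (c : ℝ) (hb : ∀ i ∈ s, u i ≠ 0 → c ≤ ν (u i)) :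
    (∑ i ∈ s, u i) ≠ 0 → c ≤ ν (∑ i ∈ s, u i) := by
  induction s using Finset.cons_induction with
  | empty => intro hs; simp at hs
  | cons a s' hnot ih =>
    intro hs
    rw [Finset.sum_cons] at hs ⊢
    by_cases ha : u a = 0
    · rw [ha, zero_add] at hs ⊢
      exact ih (fun i hi => hb i (Finset.mem_cons_of_mem hi)) hs
    by_cases hT : (∑ i ∈ s', u i) = 0
    · rw [hT, add_zero] at hs ⊢
      exact hb a (Finset.mem_cons_self a s') ha
    · have h1 := hb a (Finset.mem_cons_self a s') ha
      have h2 := ih (fun i hi => hb i (Finset.mem_cons_of_mem hi)) hT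
      calc c ≤ min (ν (u a)) (ν (∑ i ∈ s', u i)) := le_min h1 h2
        _ ≤ _ := hν.2 _ _ ha hT hs

theorem IsVal.val_sum_gt (hν : IsVal ν) {ι : Type*} (s : Finset ι)
    (u : ι → Polynomial K) (c : ℝ) (hb : ∀ i ∈ s, u i ≠ 0 → c < ν (u i)) :
    (∑ i ∈ s, u i) ≠ 0 → c < ν (∑ i ∈ s, u i) := by
  induction s using Finset.cons_induction with
  | empty => intro hs; simp at hs
  | cons a s' hnot ih =>
    intro hs
    rw [Finset.sum_cons] at hs ⊢
    by_cases ha : u a = 0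
    · rw [ha, zero_add] at hs ⊢
      exact ih (fun i hi => hb i (Finset.mem_cons_of_mem hi)) hs
    by_cases hT : (∑ i ∈ s', u i) = 0
    · rw [hT, add_zero] at hs ⊢
      exact hb a (Finset.mem_cons_self a s') ha
    · have h1 := hb a (Finset.mem_cons_self a s') ha
      have h2 := ih (fun i hi => hb i (Finset.mem_cons_of_mem hi)) hT
      calc c < min (ν (u a)) (ν (∑ i ∈ s', u i)) := lt_min h1 h2
        _ ≤ _ := hν.2 _ _ ha hT hs

theorem IsVal.val_sum_eq (hν : IsVal ν) {ι : Type*} [DecidableEq ι] {s : Finset ι}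
    (u : ι → Polynomial K) (c : ℝ) {a : ι} (ha : a ∈ s) (hua : u a ≠ 0) (hva : ν (u a) = c)
    (hother : ∀ i ∈ s, i ≠ a → u i ≠ 0 → c < ν (u i)) :
    (∑ i ∈ s, u i) ≠ 0 ∧ ν (∑ i ∈ s, u i) = c := by
  rw [← Finset.add_sum_erase s u ha]
  by_cases hT : (∑ i ∈ s.erase a, u i) = 0
  · rw [hT, add_zero]; exact ⟨hua, hva⟩
  · have hgt : c < ν (∑ i ∈ s.erase a, u i) :=
      hν.val_sum_gt _ u c (fun i hi hne => hother i (Finset.mem_of_mem_erase hi)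
        (Finset.ne_of_mem_erase hi) hne) hT
    have hres := hν.val_add_left hua hT (by rw [hva]; exact hgt)
    exact ⟨hres.1, by rw [hres.2, hva]⟩

/- ### `qc` lemmas -/

theorem qc_zero' (Q f : Polynomial K) : qc Q f 0 = f %ₘ Q := rfl

theorem qc_succ' (Q f : Polynomial K) (i : ℕ) : qc Q f (i + 1) = qc Q (f /ₘ Q) i := rfl

theorem qc_zero_left (Q : Polynomial K) (i : ℕ) : qc Q 0 i = 0 := by
  induction i with
  | zero => rw [qc_zero', Polynomial.zero_modByMonic]
  | succ i ih => rw [qc_succ', Polynomial.zero_divByMonic]; exact ih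

theorem qc_degree {Q : Polynomial K} (hQ : Q.Monic) (f : Polynomial K) (i : ℕ) :
    (qc Q f i).degree < Q.degree := by
  induction i generalizing f with
  | zero => exact Polynomial.degree_modByMonic_lt f hQ
  | succ i ih => rw [qc_succ']; exact ih _

theorem qc_add {Q : Polynomial K} (hQ : Q.Monic) (f g : Polynomial K) (i : ℕ) :
    qc Q (f + g) i = qc Q f i + qc Q g i := by
  induction i generalizing f g with
  | zero => rw [qc_zero', qc_zero', qc_zero', Polynomial.add_modByMonic]
  | succ i ih =>
    have hdiv : (f + g) /ₘ Q = f /ₘ Q + g /ₘ Q := by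
      have h1 := Polynomial.modByMonic_add_div f Q
      have h2 := Polynomial.modByMonic_add_div g Q
      have h3 := Polynomial.modByMonic_add_div (f + g) Q
      have h4 : (f + g) %ₘ Q = f %ₘ Q + g %ₘ Q := Polynomial.add_modByMonic f g
      apply mul_left_cancel₀ hQ.ne_zero
      linear_combination h3 - h1 - h2 - h4
    rw [qc_succ', qc_succ', qc_succ', hdiv, ih]

theorem qc_neg {Q : Polynomial K} (hQ : Q.Monic) (f : Polynomial K) (i : ℕ) :
    qc Q (-f) i = -(qc Q f i) := by
  have h : qc Q f i + qc Q (-f) i = 0 := by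
    rw [← qc_add hQ, add_neg_cancel, qc_zero_left]
  exact eq_neg_of_add_eq_zero_right h

theorem qc_expansion {Q : Polynomial K} (hQ : Q.Monic) (hQd : 0 < Q.natDegree) :
    ∀ (N : ℕ) (f : Polynomial K), f.natDegree ≤ N →
      f = ∑ i ∈ Finset.range (N + 1), qc Q f i * Q ^ i := by
  intro N
  induction N with
  | zero =>
    intro f hf
    rw [Finset.sum_range_one, pow_zero, mul_one, qc_zero']
    have h0 : f.natDegree = 0 := Nat.le_zero.mp hf
    have hdeg : f.degree < Q.degree := by
      apply lt_of_le_of_lt Polynomial.degree_le_natDegree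
      rw [h0, Polynomial.degree_eq_natDegree hQ.ne_zero]
      exact_mod_cast hQd
    exact ((Polynomial.modByMonic_eq_self_iff hQ).mpr hdeg).symm
  | succ N ih =>
    intro f hf
    have hstep := Polynomial.modByMonic_add_div f Q
    have hd : (f /ₘ Q).natDegree ≤ N := by
      rw [Polynomial.natDegree_divByMonic f hQ]
      omega
    rw [Finset.sum_range_succ']
    have hrw : ∀ i ∈ Finset.range (N + 1),
        qc Q f (i + 1) * Q ^ (i + 1) = (qc Q (f /ₘ Q) i * Q ^ i) * Q := by
      intro i _; rw [qc_succ', pow_succ]; ring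
    rw [Finset.sum_congr rfl hrw, ← Finset.sum_mul, ← ih (f /ₘ Q) hd, qc_zero', pow_zero,
      mul_one]
    linear_combination -hstep

theorem qc_ne_zero_le {Q : Polynomial K} (hQ : Q.Monic) (hQd : 0 < Q.natDegree) :
    ∀ (i : ℕ) (f : Polynomial K), qc Q f i ≠ 0 → i ≤ f.natDegree := by
  intro i
  induction i with
  | zero => intro f _; exact Nat.zero_le _
  | succ i ih =>
    intro f hf
    rw [qc_succ'] at hf
    have hdvd : f /ₘ Q ≠ 0 := by
      intro h0; rw [h0, qc_zero_left] at hf; exact hf rfl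
    have h1 := ih _ hf
    rw [Polynomial.natDegree_divByMonic f hQ] at h1
    have h2 : Q.natDegree ≤ f.natDegree := by
      by_contra hc
      push_neg at hc
      have hf0 : f ≠ 0 := by
        intro h0; rw [h0, Polynomial.zero_divByMonic] at hdvd; exact hdvd rfl
      have hdlt : f.degree < Q.degree := by
        rw [Polynomial.degree_eq_natDegree hf0, Polynomial.degree_eq_natDegree hQ.ne_zero]
        exact_mod_cast hc
      exact hdvd ((Polynomial.divByMonic_eq_zero_iff hQ).mpr hdlt)
    omega

theorem qc_mul_self_zero {Q : Polynomial K} (hQ : Q.Monic) (w : Polynomial K) :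
    qc Q (Q * w) 0 = 0 := by
  rw [qc_zero', (Polynomial.modByMonic_eq_zero_iff_dvd hQ).mpr (dvd_mul_right Q w)]

theorem qc_mul_self_succ {Q : Polynomial K} (hQ : Q.Monic) (w : Polynomial K) (i : ℕ) :
    qc Q (Q * w) (i + 1) = qc Q w i := by
  rw [qc_succ']
  congr 1
  have h := Polynomial.modByMonic_add_div (Q * w) Q
  rw [(Polynomial.modByMonic_eq_zero_iff_dvd hQ).mpr (dvd_mul_right Q w), zero_add] at h
  exact mul_left_cancel₀ hQ.ne_zero h

end AuxLemmas

/- ### `nuQ` lemmas -/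

section NuQLemmas

variable {K : Type*} [Field K] {ν : Polynomial K → ℝ} {Q : Polynomial K}

theorem nuQset_finite (hQ : Q.Monic) (hQd : 0 < Q.natDegree)
    (ν : Polynomial K → ℝ) (f : Polynomial K) :
    {r : ℝ | ∃ i : ℕ, qc Q f i ≠ 0 ∧ r = ν (qc Q f i * Q ^ i)}.Finite := by
  apply Set.Finite.subset
    ((Set.finite_Iic f.natDegree).image (fun i => ν (qc Q f i * Q ^ i)))
  rintro r ⟨i, hi, rfl⟩
  exact ⟨i, qc_ne_zero_le hQ hQd i f hi, rfl⟩

theorem exists_qc_ne_zero (hQ : Q.Monic) (hQd : 0 < Q.natDegree)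
    {f : Polynomial K} (hf : f ≠ 0) : ∃ i, qc Q f i ≠ 0 := by
  by_contra hc
  push_neg at hc
  apply hf
  calc f = ∑ i ∈ Finset.range (f.natDegree + 1), qc Q f i * Q ^ i :=
        qc_expansion hQ hQd _ f le_rfl
    _ = 0 := by simp [hc]

theorem nuQ_le (hQ : Q.Monic) (hQd : 0 < Q.natDegree)
    (ν : Polynomial K → ℝ) {f : Polynomial K} {i : ℕ} (hi : qc Q f i ≠ 0) :
    nuQ ν Q f ≤ ν (qc Q f i * Q ^ i) :=
  csInf_le (nuQset_finite hQ hQd ν f).bddBelow ⟨i, hi, rfl⟩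

theorem nuQ_attained (hQ : Q.Monic) (hQd : 0 < Q.natDegree)
    (ν : Polynomial K → ℝ) {f : Polynomial K} (hf : f ≠ 0) :
    ∃ i, qc Q f i ≠ 0 ∧ ν (qc Q f i * Q ^ i) = nuQ ν Q f := by
  have hne : {r : ℝ | ∃ i : ℕ, qc Q f i ≠ 0 ∧ r = ν (qc Q f i * Q ^ i)}.Nonempty := by
    obtain ⟨i, hi⟩ := exists_qc_ne_zero hQ hQd hf
    exact ⟨_, i, hi, rfl⟩
  have hmem : nuQ ν Q f ∈ {r : ℝ | ∃ i : ℕ, qc Q f i ≠ 0 ∧ r = ν (qc Q f i * Q ^ i)} :=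
    hne.csInf_mem (nuQset_finite hQ hQd ν f)
  obtain ⟨i, hi, heq⟩ := hmem
  exact ⟨i, hi, heq.symm⟩

theorem nuQ_le_val (hν : IsVal ν) (hQ : Q.Monic) (hQd : 0 < Q.natDegree)
    {f : Polynomial K} (hf : f ≠ 0) : nuQ ν Q f ≤ ν f := by
  have hexp := qc_expansion hQ hQd f.natDegree f le_rfl
  have hres := hν.val_sum_ge (Finset.range (f.natDegree + 1))
    (fun i => qc Q f i * Q ^ i) (nuQ ν Q f) ?_ ?_
  · rwa [← hexp] at hres
  · intro i _ hne
    have hqc : qc Q f i ≠ 0 := by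
      intro h0
      exact hne (by show qc Q f i * Q ^ i = 0; rw [h0, zero_mul])
    exact nuQ_le hQ hQd ν hqc
  · rwa [← hexp]

theorem nuQ_add_min (hν : IsVal ν) (hQ : Q.Monic) (hQd : 0 < Q.natDegree)
    {f g : Polynomial K} (hf : f ≠ 0) (hg : g ≠ 0) (hfg : f + g ≠ 0) :
    min (nuQ ν Q f) (nuQ ν Q g) ≤ nuQ ν Q (f + g) := by
  obtain ⟨i, hi, hival⟩ := nuQ_attained hQ hQd ν hfg
  rw [← hival, qc_add hQ, add_mul]
  rw [qc_add hQ] at hi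
  have hQi : (Q : Polynomial K) ^ i ≠ 0 := pow_ne_zero _ hQ.ne_zero
  by_cases h1 : qc Q f i = 0
  · have h2 : qc Q g i ≠ 0 := by
      intro h0; rw [h0, h1] at hi; simp at hi
    rw [h1, zero_mul, zero_add]
    exact le_trans (min_le_right _ _) (nuQ_le hQ hQd ν h2)
  by_cases h2 : qc Q g i = 0
  · rw [h2, zero_mul, add_zero]
    exact le_trans (min_le_left _ _) (nuQ_le hQ hQd ν h1)
  · have hne : qc Q f i * Q ^ i + qc Q g i * Q ^ i ≠ 0 := by
      rw [← add_mul]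
      exact mul_ne_zero hi hQi
    calc min (nuQ ν Q f) (nuQ ν Q g)
        ≤ min (ν (qc Q f i * Q ^ i)) (ν (qc Q g i * Q ^ i)) :=
          min_le_min (nuQ_le hQ hQd ν h1) (nuQ_le hQ hQd ν h2)
      _ ≤ _ := hν.2 _ _ (mul_ne_zero h1 hQi) (mul_ne_zero h2 hQi) hne

theorem nuQ_add_lt (hν : IsVal ν) (hQ : Q.Monic) (hQd : 0 < Q.natDegree)
    {f g : Polynomial K} (hf : f ≠ 0) (hg : g ≠ 0) (hlt : nuQ ν Q f < nuQ ν Q g) :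
    f + g ≠ 0 ∧ nuQ ν Q (f + g) = nuQ ν Q f := by
  obtain ⟨i, hi, hival⟩ := nuQ_attained hQ hQd ν hf
  have hQi : (Q : Polynomial K) ^ i ≠ 0 := pow_ne_zero _ hQ.ne_zero
  have hkey : qc Q (f + g) i ≠ 0 ∧ ν (qc Q (f + g) i * Q ^ i) = nuQ ν Q f := by
    rw [qc_add hQ]
    by_cases h1 : qc Q g i = 0
    · rw [h1, add_zero]; exact ⟨hi, hival⟩
    · have hB : nuQ ν Q g ≤ ν (qc Q g i * Q ^ i) := nuQ_le hQ hQd ν h1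
      have hres := hν.val_add_left (mul_ne_zero hi hQi) (mul_ne_zero h1 hQi)
        (by rw [hival]; exact lt_of_lt_of_le hlt hB)
      rw [← add_mul] at hres
      refine ⟨fun h0 => hres.1 (by rw [h0, zero_mul]), ?_⟩
      rw [hres.2, hival]
  have hfg : f + g ≠ 0 := by
    intro h0; rw [h0, qc_zero_left] at hkey; exact hkey.1 rfl
  refine ⟨hfg, le_antisymm ?_ ?_⟩
  · rw [← hkey.2]
    exact nuQ_le hQ hQd ν hkey.1
  · have := nuQ_add_min hν hQ hQd hf hg hfg
    rwa [min_eq_left hlt.le] at this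

theorem nuQ_neg (hν : IsVal ν) (hQ : Q.Monic) (f : Polynomial K) :
    nuQ ν Q (-f) = nuQ ν Q f := by
  unfold nuQ
  congr 1
  ext r
  constructor
  · rintro ⟨i, hi, rfl⟩
    rw [qc_neg hQ] at hi
    have hi' : qc Q f i ≠ 0 := fun h0 => hi (by rw [h0, neg_zero])
    refine ⟨i, hi', ?_⟩
    rw [qc_neg hQ, neg_mul]
    rw [hν.val_neg (mul_ne_zero hi' (pow_ne_zero _ hQ.ne_zero))]
  · rintro ⟨i, hi, rfl⟩
    refine ⟨i, by rw [qc_neg hQ]; exact neg_ne_zero.mpr hi, ?_⟩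
    rw [qc_neg hQ, neg_mul]
    rw [hν.val_neg (mul_ne_zero hi (pow_ne_zero _ hQ.ne_zero))]

theorem nuQ_low (hQ : Q.Monic) (ν : Polynomial K → ℝ)
    {a : Polynomial K} (ha : a ≠ 0) (had : a.degree < Q.degree) :
    nuQ ν Q a = ν a := by
  have h0 : qc Q a 0 = a := by
    rw [qc_zero']; exact (Polynomial.modByMonic_eq_self_iff hQ).mpr had
  have hs : ∀ i, qc Q a (i + 1) = 0 := by
    intro i
    rw [qc_succ', (Polynomial.divByMonic_eq_zero_iff hQ).mpr had, qc_zero_left]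
  have hset : {r : ℝ | ∃ i : ℕ, qc Q a i ≠ 0 ∧ r = ν (qc Q a i * Q ^ i)} = {ν a} := by
    ext r
    constructor
    · rintro ⟨i, hi, rfl⟩
      cases i with
      | zero => rw [h0, pow_zero, mul_one]; rfl
      | succ i => rw [hs i] at hi; exact absurd rfl hi
    · intro hr
      rw [Set.mem_singleton_iff] at hr
      subst hr
      exact ⟨0, by rw [h0]; exact ha, by rw [h0, pow_zero, mul_one]⟩
  unfold nuQ
  rw [hset, csInf_singleton]

theorem nuQ_mul_self (hν : IsVal ν) (hQ : Q.Monic) (hQd : 0 < Q.natDegree)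
    {w : Polynomial K} (hw : w ≠ 0) :
    nuQ ν Q (Q * w) = ν Q + nuQ ν Q w := by
  have hQne := hQ.ne_zero
  have hQw : Q * w ≠ 0 := mul_ne_zero hQne hw
  apply le_antisymm
  · obtain ⟨i, hi, hival⟩ := nuQ_attained hQ hQd ν hw
    have h1 : qc Q (Q * w) (i + 1) ≠ 0 := by rw [qc_mul_self_succ hQ]; exact hi
    have h2 := nuQ_le hQ hQd ν h1
    rw [qc_mul_self_succ hQ] at h2
    refine le_trans h2 (le_of_eq ?_)
    rw [pow_succ, ← mul_assoc, hν.1 _ _ (mul_ne_zero hi (pow_ne_zero _ hQne)) hQne, hival]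
    ring
  · obtain ⟨j, hj, hjval⟩ := nuQ_attained hQ hQd ν hQw
    cases j with
    | zero => rw [qc_mul_self_zero hQ] at hj; exact absurd rfl hj
    | succ i =>
      rw [qc_mul_self_succ hQ] at hj hjval
      rw [← hjval]
      have heq : ν (qc Q w i * Q ^ (i + 1)) = ν Q + ν (qc Q w i * Q ^ i) := by
        rw [pow_succ, ← mul_assoc, hν.1 _ _ (mul_ne_zero hj (pow_ne_zero _ hQne)) hQne]
        ring
      rw [heq]
      have := nuQ_le hQ hQd ν hj
      linarith

theorem nuQ_sum_ge (hν : IsVal ν) (hQ : Q.Monic) (hQd : 0 < Q.natDegree)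
    {ι : Type*} (s : Finset ι) (u : ι → Polynomial K) (c : ℝ)
    (hb : ∀ i ∈ s, u i ≠ 0 → c ≤ nuQ ν Q (u i)) :
    (∑ i ∈ s, u i) ≠ 0 → c ≤ nuQ ν Q (∑ i ∈ s, u i) := by
  induction s using Finset.cons_induction with
  | empty => intro hs; simp at hs
  | cons a s' hnot ih =>
    intro hs
    rw [Finset.sum_cons] at hs ⊢
    by_cases ha : u a = 0
    · rw [ha, zero_add] at hs ⊢
      exact ih (fun i hi => hb i (Finset.mem_cons_of_mem hi)) hs
    by_cases hT : (∑ i ∈ s', u i) = 0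
    · rw [hT, add_zero] at hs ⊢
      exact hb a (Finset.mem_cons_self a s') ha
    · have h1 := hb a (Finset.mem_cons_self a s') ha
      have h2 := ih (fun i hi => hb i (Finset.mem_cons_of_mem hi)) hT
      calc c ≤ min (nuQ ν Q (u a)) (nuQ ν Q (∑ i ∈ s', u i)) := le_min h1 h2
        _ ≤ _ := nuQ_add_min hν hQ hQd ha hT hs

theorem nuQ_mul_pow (hν : IsVal ν) (hQ : Q.Monic) (hQd : 0 < Q.natDegree)
    {x : Polynomial K} (hx : x ≠ 0) (i : ℕ) :
    nuQ ν Q (x * Q ^ i) = nuQ ν Q x + i * ν Q := by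
  induction i with
  | zero => simp
  | succ i ih =>
    have hxi : x * Q ^ i ≠ 0 := mul_ne_zero hx (pow_ne_zero _ hQ.ne_zero)
    have hre : x * Q ^ (i + 1) = Q * (x * Q ^ i) := by ring
    rw [hre, nuQ_mul_self hν hQ hQd hxi, ih]
    push_cast; ring

end NuQLemmas

/- ### `eps` lemmas -/

section EpsLemmas

variable {K : Type*} [Field K] {ν : Polynomial K → ℝ}

theorem epsSet_finite (ν : Polynomial K → ℝ) (f : Polynomial K) :
    {r : ℝ | ∃ b : ℕ, 1 ≤ b ∧ hasseDeriv b f ≠ 0 ∧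
      r = (ν f - ν (hasseDeriv b f)) / b}.Finite := by
  apply Set.Finite.subset
    ((Set.finite_Iic f.natDegree).image (fun b => (ν f - ν (hasseDeriv b f)) / b))
  rintro r ⟨b, _, hb, rfl⟩
  refine ⟨b, ?_, rfl⟩
  by_contra hc
  exact hb (Polynomial.hasseDeriv_eq_zero_of_lt_natDegree f b (by simpa using hc))

theorem eps_ge (ν : Polynomial K → ℝ) (f : Polynomial K) {b : ℕ}
    (hb1 : 1 ≤ b) (hbne : hasseDeriv b f ≠ 0) :
    (ν f - ν (hasseDeriv b f)) / b ≤ eps ν f :=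
  le_csSup (epsSet_finite ν f).bddAbove ⟨b, hb1, hbne, rfl⟩

theorem val_hasseDeriv_ge (ν : Polynomial K → ℝ) (f : Polynomial K) (b : ℕ)
    (hbne : hasseDeriv b f ≠ 0) :
    ν f - b * eps ν f ≤ ν (hasseDeriv b f) := by
  cases b with
  | zero => simp [Polynomial.hasseDeriv_zero']
  | succ b =>
    have h := eps_ge ν f (Nat.succ_le_succ (Nat.zero_le b)) hbne
    have hbpos : (0 : ℝ) < ((b + 1 : ℕ) : ℝ) := by positivity
    rw [div_le_iff₀ hbpos] at h
    push_cast at h ⊢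
    nlinarith [h]

theorem hasseDeriv_natDegree_ne_zero {f : Polynomial K} (hf : f ≠ 0) :
    hasseDeriv f.natDegree f ≠ 0 := by
  intro h0
  have h1 : (hasseDeriv f.natDegree f).coeff 0 = f.coeff f.natDegree := by
    rw [Polynomial.hasseDeriv_coeff]
    simp
  rw [h0] at h1
  simp only [Polynomial.coeff_zero] at h1
  exact hf (Polynomial.leadingCoeff_eq_zero.mp h1.symm)

theorem epsSet_nonempty (ν : Polynomial K → ℝ) {f : Polynomial K} (hf : f ≠ 0)
    (hd : 0 < f.natDegree) :
    {r : ℝ | ∃ b : ℕ, 1 ≤ b ∧ hasseDeriv b f ≠ 0 ∧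
      r = (ν f - ν (hasseDeriv b f)) / b}.Nonempty :=
  ⟨_, f.natDegree, hd, hasseDeriv_natDegree_ne_zero hf, rfl⟩

theorem eps_attained (ν : Polynomial K → ℝ) {f : Polynomial K} (hf : f ≠ 0)
    (hd : 0 < f.natDegree) :
    ∃ b : ℕ, 1 ≤ b ∧ hasseDeriv b f ≠ 0 ∧ ν (hasseDeriv b f) = ν f - b * eps ν f := by
  have hmem : eps ν f ∈ {r : ℝ | ∃ b : ℕ, 1 ≤ b ∧ hasseDeriv b f ≠ 0 ∧
      r = (ν f - ν (hasseDeriv b f)) / b} :=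
    (epsSet_nonempty ν hf hd).csSup_mem (epsSet_finite ν f)
  obtain ⟨b, hb1, hbne, heq⟩ := hmem
  refine ⟨b, hb1, hbne, ?_⟩
  have hbpos : (0 : ℝ) < (b : ℝ) := by exact_mod_cast hb1
  rw [eq_div_iff hbpos.ne'] at heq
  nlinarith [heq]

theorem eps_mul_le (hν : IsVal ν) {u v : Polynomial K} (hu : u ≠ 0) (hv : v ≠ 0)
    (hd : 0 < (u * v).natDegree) : eps ν (u * v) ≤ max (eps ν u) (eps ν v) := by
  have huv : u * v ≠ 0 := mul_ne_zero hu hv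
  apply csSup_le (epsSet_nonempty ν huv hd)
  rintro r ⟨b, hb1, hbne, rfl⟩
  have hbpos : (0 : ℝ) < (b : ℝ) := by exact_mod_cast hb1
  rw [div_le_iff₀ hbpos]
  have hbound : ν (u * v) - b * max (eps ν u) (eps ν v) ≤ ν (hasseDeriv b (u * v)) := by
    have hsum := Polynomial.hasseDeriv_mul (k := b) u v
    rw [hsum] at hbne ⊢
    apply hν.val_sum_ge _ _ _ ?_ hbne
    rintro ⟨i, j⟩ hij hne
    have hijsum : i + j = b := Finset.HasAntidiagonal.mem_antidiagonal.mp hij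
    have hiu : hasseDeriv i u ≠ 0 := left_ne_zero_of_mul hne
    have hjv : hasseDeriv j v ≠ 0 := right_ne_zero_of_mul hne
    show ν (u * v) - b * max (eps ν u) (eps ν v) ≤ ν (hasseDeriv i u * hasseDeriv j v)
    rw [hν.1 _ _ hiu hjv]
    have h1 := val_hasseDeriv_ge ν u i hiu
    have h2 := val_hasseDeriv_ge ν v j hjv
    have h3 : (i : ℝ) * eps ν u ≤ i * max (eps ν u) (eps ν v) :=
      mul_le_mul_of_nonneg_left (le_max_left _ _) (by positivity)
    have h4 : (j : ℝ) * eps ν v ≤ j * max (eps ν u) (eps ν v) :=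
      mul_le_mul_of_nonneg_left (le_max_right _ _) (by positivity)
    have h5 : (i : ℝ) + j = b := by exact_mod_cast hijsum
    have h6 : ν (u * v) = ν u + ν v := hν.1 u v hu hv
    have h7 : (b : ℝ) * max (eps ν u) (eps ν v) =
        i * max (eps ν u) (eps ν v) + j * max (eps ν u) (eps ν v) := by
      rw [← h5]; ring
    linarith
  have hcomm : (b : ℝ) * max (eps ν u) (eps ν v) = max (eps ν u) (eps ν v) * b :=
    mul_comm _ _
  linarith

theorem eps_add_le (hν : IsVal ν) {x y : Polynomial K} (hx : x ≠ 0) (hy : y ≠ 0)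
    (hxy : x + y ≠ 0) (hd : 0 < (x + y).natDegree)
    (h1 : ν (x + y) ≤ ν x) (h2 : ν (x + y) ≤ ν y) :
    eps ν (x + y) ≤ max (eps ν x) (eps ν y) := by
  apply csSup_le (epsSet_nonempty ν hxy hd)
  rintro r ⟨b, hb1, hbne, rfl⟩
  have hbpos : (0 : ℝ) < (b : ℝ) := by exact_mod_cast hb1
  rw [div_le_iff₀ hbpos]
  have hadd : hasseDeriv b (x + y) = hasseDeriv b x + hasseDeriv b y := map_add _ _ _
  have h3 : (b : ℝ) * eps ν x ≤ b * max (eps ν x) (eps ν y) :=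
    mul_le_mul_of_nonneg_left (le_max_left _ _) (by positivity)
  have h4 : (b : ℝ) * eps ν y ≤ b * max (eps ν x) (eps ν y) :=
    mul_le_mul_of_nonneg_left (le_max_right _ _) (by positivity)
  have hbound : ν (x + y) - b * max (eps ν x) (eps ν y) ≤ ν (hasseDeriv b (x + y)) := by
    have hbx := val_hasseDeriv_ge ν x b
    have hby := val_hasseDeriv_ge ν y b
    rw [hadd] at hbne ⊢
    by_cases hbx0 : hasseDeriv b x = 0
    · rw [hbx0, zero_add] at hbne ⊢
      have := hby hbne; linarith
    by_cases hby0 : hasseDeriv b y = 0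
    · rw [hby0, add_zero] at hbne ⊢
      have := hbx hbx0; linarith
    · have hmin := hν.2 _ _ hbx0 hby0 hbne
      have hx' := hbx hbx0
      have hy' := hby hby0
      have hlow : ν (x + y) - b * max (eps ν x) (eps ν y) ≤
          min (ν (hasseDeriv b x)) (ν (hasseDeriv b y)) :=
        le_min (by linarith) (by linarith)
      linarith
  have hcomm : (b : ℝ) * max (eps ν x) (eps ν y) = max (eps ν x) (eps ν y) * b :=
    mul_comm _ _
  linarith

theorem eps_le_eps_mul {Q : Polynomial K} (hν : IsVal ν) (hK : IsKeyPol ν Q)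
    {q : Polynomial K} (hq : q ≠ 0) (hqd : q.natDegree < Q.natDegree) :
    eps ν Q ≤ eps ν (q * Q) := by
  obtain ⟨hQm, hQd, hQkey⟩ := hK
  have hQne := hQm.ne_zero
  obtain ⟨b, hb1, hbQ, hbQval⟩ := eps_attained ν hQne hQd
  have hεq : eps ν q < eps ν Q := hQkey q hq hqd
  have hsum := Polynomial.hasseDeriv_mul (k := b) q Q
  set c := ν q + ν Q - b * eps ν Q with hc
  have hspecial : ((0, b) : ℕ × ℕ) ∈ Finset.HasAntidiagonal.antidiagonal b := by simp
  have hterm0 : hasseDeriv 0 q * hasseDeriv b Q ≠ 0 := by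
    rw [Polynomial.hasseDeriv_zero']
    exact mul_ne_zero hq hbQ
  have htermval : ν (hasseDeriv 0 q * hasseDeriv b Q) = c := by
    rw [Polynomial.hasseDeriv_zero', hν.1 _ _ hq hbQ, hbQval, hc]
    ring
  have hother : ∀ p ∈ Finset.HasAntidiagonal.antidiagonal b, p ≠ (0, b) →
      hasseDeriv p.1 q * hasseDeriv p.2 Q ≠ 0 →
      c < ν (hasseDeriv p.1 q * hasseDeriv p.2 Q) := by
    rintro ⟨i, j⟩ hij hne hnz
    have hijs : i + j = b := Finset.HasAntidiagonal.mem_antidiagonal.mp hij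
    have hi1 : 1 ≤ i := by
      rcases Nat.eq_zero_or_pos i with h0 | hpos
      · exfalso
        apply hne
        have hj : j = b := by omega
        rw [h0, hj]
      · exact hpos
    have hiq : hasseDeriv i q ≠ 0 := left_ne_zero_of_mul hnz
    have hjQ : hasseDeriv j Q ≠ 0 := right_ne_zero_of_mul hnz
    show c < ν (hasseDeriv i q * hasseDeriv j Q)
    rw [hν.1 _ _ hiq hjQ]
    have h1 := val_hasseDeriv_ge ν q i hiq
    have h2 := val_hasseDeriv_ge ν Q j hjQ
    have h5 : (i : ℝ) + j = b := by exact_mod_cast hijs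
    have h6 : (1 : ℝ) ≤ (i : ℝ) := by exact_mod_cast hi1
    have h7 : (i : ℝ) * eps ν q < i * eps ν Q :=
      mul_lt_mul_of_pos_left hεq (by linarith)
    have h8 : (b : ℝ) * eps ν Q = i * eps ν Q + j * eps ν Q := by
      rw [← h5]; ring
    rw [hc]
    linarith
  have hval := hν.val_sum_eq (fun p : ℕ × ℕ => hasseDeriv p.1 q * hasseDeriv p.2 Q) c
    hspecial hterm0 htermval hother
  rw [← hsum] at hval
  have h9 := eps_ge ν (q * Q) hb1 hval.1
  rw [hval.2] at h9
  have h10 : ν (q * Q) = ν q + ν Q := hν.1 _ _ hq hQne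
  rw [h10, hc] at h9
  have hbpos : (0 : ℝ) < (b : ℝ) := by exact_mod_cast hb1
  have h11 : (ν q + ν Q - (ν q + ν Q - b * eps ν Q)) / b = eps ν Q := by
    field_simp
    ring
  rwa [h11] at h9

theorem key_mul_bound {Q : Polynomial K} (hν : IsVal ν) (hK : IsKeyPol ν Q)
    {u v : Polynomial K} (hu : u ≠ 0) (hv : v ≠ 0)
    (hud : u.natDegree < Q.natDegree) (hvd : v.natDegree < Q.natDegree) :
    ((u * v) %ₘ Q ≠ 0 → ν u + ν v ≤ ν ((u * v) %ₘ Q)) ∧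
    ((u * v) /ₘ Q ≠ 0 → ν u + ν v ≤ ν ((u * v) /ₘ Q) + ν Q) := by
  have hQm := hK.1
  have hQd := hK.2.1
  have hQkey := hK.2.2
  have hQne := hQm.ne_zero
  have hf : u * v ≠ 0 := mul_ne_zero hu hv
  set q := (u * v) /ₘ Q with hqdef
  set r := (u * v) %ₘ Q with hrdef
  have hmd : r + Q * q = u * v := Polynomial.modByMonic_add_div (u * v) Q
  have hfval : ν (u * v) = ν u + ν v := hν.1 u v hu hv
  have hqpart : q ≠ 0 → ν u + ν v ≤ ν q + ν Q := by
    intro hq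
    by_contra hcon
    push_neg at hcon
    have hQq : Q * q ≠ 0 := mul_ne_zero hQne hq
    have hQqval : ν (Q * q) = ν Q + ν q := hν.1 _ _ hQne hq
    have hlt : ν (Q * q) < ν (u * v) := by rw [hQqval, hfval]; linarith
    have hr0 : r ≠ 0 := by
      intro h0
      rw [h0, zero_add] at hmd
      have hcc := hQqval
      rw [hmd, hfval] at hcc
      linarith
    have hrval : ν r = ν (Q * q) := by
      have hxy := hν.val_add_left (x := -(Q * q)) (y := u * v)
        (neg_ne_zero.mpr hQq) hf (by rw [hν.val_neg hQq]; exact hlt)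
      have heq2 : -(Q * q) + (u * v) = r := by rw [← hmd]; ring
      rw [heq2, hν.val_neg hQq] at hxy
      exact hxy.2
    have hdegQq : 0 < (Q * q).natDegree := by
      rw [Polynomial.natDegree_mul hQne hq]
      omega
    have hQq_eq : u * v + -r = Q * q := by rw [← hmd]; ring
    have hεsum : eps ν (Q * q) ≤ max (eps ν (u * v)) (eps ν (-r)) := by
      have hres := eps_add_le hν (x := u * v) (y := -r) hf (neg_ne_zero.mpr hr0)
        (by rw [hQq_eq]; exact hQq) (by rw [hQq_eq]; exact hdegQq)
        (by rw [hQq_eq]; exact hlt.le)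
        (by rw [hQq_eq, hν.val_neg hr0, hrval])
      rwa [hQq_eq] at hres
    have hdeguv : 0 < (u * v).natDegree := by
      have hq0 : ¬ (u * v).degree < Q.degree := fun hcc =>
        hq ((Polynomial.divByMonic_eq_zero_iff hQm).mpr hcc)
      push_neg at hq0
      have := Polynomial.natDegree_le_natDegree hq0
      omega
    have hε1 : eps ν (u * v) < eps ν Q :=
      lt_of_le_of_lt (eps_mul_le hν hu hv hdeguv)
        (max_lt (hQkey u hu hud) (hQkey v hv hvd))
    have hε2 : eps ν (-r) < eps ν Q := by
      apply hQkey _ (neg_ne_zero.mpr hr0)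
      rw [Polynomial.natDegree_neg]
      exact Polynomial.natDegree_lt_natDegree hr0 (Polynomial.degree_modByMonic_lt (u * v) hQm)
    have hqdeg : q.natDegree < Q.natDegree := by
      rw [hqdef, Polynomial.natDegree_divByMonic _ hQm]
      have := Polynomial.natDegree_mul hu hv
      omega
    have hε3 : eps ν Q ≤ eps ν (q * Q) := eps_le_eps_mul hν hK hq hqdeg
    rw [mul_comm q Q] at hε3
    have hmaxlt : max (eps ν (u * v)) (eps ν (-r)) < eps ν Q := max_lt hε1 hε2
    linarith
  have hrpart : r ≠ 0 → ν u + ν v ≤ ν r := by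
    intro hr
    by_cases hq : q = 0
    · rw [hq, mul_zero, add_zero] at hmd
      rw [hmd, hfval]
    · have hQq : Q * q ≠ 0 := mul_ne_zero hQne hq
      have hrQ : r = u * v + -(Q * q) := by rw [← hmd]; ring
      have hmin := hν.2 (u * v) (-(Q * q)) hf (neg_ne_zero.mpr hQq) (by rw [← hrQ]; exact hr)
      rw [← hrQ, hν.val_neg hQq, hν.1 _ _ hQne hq] at hmin
      have hqb := hqpart hq
      calc ν u + ν v ≤ min (ν (u * v)) (ν Q + ν q) :=
            le_min (by rw [hfval]) (by linarith)
        _ ≤ ν r := hmin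
  exact ⟨hrpart, hqpart⟩

end EpsLemmas

/- ### Comparison of truncations -/

section CompareLemmas

variable {K : Type*} [Field K] {ν : Polynomial K → ℝ}

theorem nuQ_mul_low {Q : Polynomial K} (hν : IsVal ν) (hK : IsKeyPol ν Q)
    {a w : Polynomial K} (ha : a ≠ 0) (had : a.natDegree < Q.natDegree) (hw : w ≠ 0) :
    ν a + nuQ ν Q w ≤ nuQ ν Q (a * w) := by
  have hQm := hK.1
  have hQd := hK.2.1
  have hQne := hQm.ne_zero
  have haw : a * w ≠ 0 := mul_ne_zero ha hw
  have hexp : a * w = ∑ i ∈ Finset.range (w.natDegree + 1), (a * qc Q w i) * Q ^ i := by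
    conv_lhs => rw [qc_expansion hQm hQd w.natDegree w le_rfl]
    rw [Finset.mul_sum]
    exact Finset.sum_congr rfl (fun i _ => by ring)
  rw [hexp]
  apply nuQ_sum_ge hν hQm hQd _ _ _ ?_ (by rw [← hexp]; exact haw)
  intro i _ hne
  have hqc : qc Q w i ≠ 0 := by
    intro h0
    exact hne (by show (a * qc Q w i) * Q ^ i = 0; rw [h0, mul_zero, zero_mul])
  have hqcd : (qc Q w i).natDegree < Q.natDegree :=
    Polynomial.natDegree_lt_natDegree hqc (qc_degree hQm w i)
  have haqc : a * qc Q w i ≠ 0 := mul_ne_zero ha hqc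
  show ν a + nuQ ν Q w ≤ nuQ ν Q ((a * qc Q w i) * Q ^ i)
  rw [nuQ_mul_pow hν hQm hQd haqc i]
  have hKmb := key_mul_bound hν hK ha hqc had hqcd
  have hbound : ν a + ν (qc Q w i) ≤ nuQ ν Q (a * qc Q w i) := by
    obtain ⟨k, hk, hkval⟩ := nuQ_attained hQm hQd ν haqc
    rw [← hkval]
    set z := a * qc Q w i with hzdef
    have hdivdeg : (z /ₘ Q).degree < Q.degree := by
      by_cases hz0 : z /ₘ Q = 0
      · rw [hz0, Polynomial.degree_zero]
        exact bot_lt_iff_ne_bot.mpr (fun hb => hQne (Polynomial.degree_eq_bot.mp hb))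
      · rw [Polynomial.degree_eq_natDegree hz0, Polynomial.degree_eq_natDegree hQne]
        have h1 : z.natDegree = a.natDegree + (qc Q w i).natDegree :=
          Polynomial.natDegree_mul ha hqc
        have h2 : (z /ₘ Q).natDegree = z.natDegree - Q.natDegree :=
          Polynomial.natDegree_divByMonic z hQm
        exact_mod_cast (by omega : (z /ₘ Q).natDegree < Q.natDegree)
    match k with
    | 0 =>
      rw [qc_zero'] at hk ⊢
      rw [pow_zero, mul_one]
      exact hKmb.1 hk
    | 1 =>
      have hq1 : qc Q z 1 = z /ₘ Q := by
        rw [qc_succ', qc_zero']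
        exact (Polynomial.modByMonic_eq_self_iff hQm).mpr hdivdeg
      rw [hq1] at hk ⊢
      rw [pow_one, hν.1 _ _ hk hQne]
      exact hKmb.2 hk
    | (k + 2) =>
      exfalso
      apply hk
      show qc Q z (k + 2) = 0
      rw [qc_succ', qc_succ', (Polynomial.divByMonic_eq_zero_iff hQm).mpr hdivdeg,
        qc_zero_left]
  have hlast : ν a + ν (qc Q w i) + i * ν Q = ν a + ν (qc Q w i * Q ^ i) := by
    rw [hν.1 _ _ hqc (pow_ne_zero _ hQne), hν.val_pow hQne]
    ring
  have hfin : nuQ ν Q w ≤ ν (qc Q w i * Q ^ i) := nuQ_le hQm hQd ν hqc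
  linarith

theorem nuQ_mul_keyStep {Q Q' : Polynomial K} (hν : IsVal ν) (hK : IsKeyPol ν Q)
    (hQ'm : Q'.Monic) (hdeg : Q'.natDegree = Q.natDegree) (hle : ν Q' ≤ ν Q)
    {y : Polynomial K} (hy : y ≠ 0) : nuQ ν Q y + ν Q' ≤ nuQ ν Q (y * Q') := by
  have hQm := hK.1
  have hQd := hK.2.1
  by_cases heq : Q' = Q
  · subst heq
    rw [mul_comm, nuQ_mul_self hν hQm hQd hy]
    linarith
  · set a := Q' - Q with hadef
    have ha : a ≠ 0 := sub_ne_zero.mpr heq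
    have hdq : Q'.degree = Q.degree := by
      rw [Polynomial.degree_eq_natDegree hQ'm.ne_zero,
        Polynomial.degree_eq_natDegree hQm.ne_zero, hdeg]
    have hdega : a.degree < Q.degree := by
      have := Polynomial.degree_sub_lt hdq hQ'm.ne_zero
        (by rw [hQ'm.leadingCoeff, hQm.leadingCoeff])
      rwa [hdq] at this
    have hdegan : a.natDegree < Q.natDegree := Polynomial.natDegree_lt_natDegree ha hdega
    have hνa : ν Q' ≤ ν a := by
      have hsum : Q' + -Q = a := by rw [hadef]; ring
      have hres := hν.2 Q' (-Q) hQ'm.ne_zero (neg_ne_zero.mpr hQm.ne_zero)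
        (by rw [hsum]; exact ha)
      rw [hsum, hν.val_neg hQm.ne_zero, min_eq_left hle] at hres
      exact hres
    have hsplit : y * Q' = Q * y + a * y := by rw [hadef]; ring
    have hQy : Q * y ≠ 0 := mul_ne_zero hQm.ne_zero hy
    have hay : a * y ≠ 0 := mul_ne_zero ha hy
    have h1 : nuQ ν Q y + ν Q' ≤ nuQ ν Q (Q * y) := by
      rw [nuQ_mul_self hν hQm hQd hy]
      linarith
    have h2 : nuQ ν Q y + ν Q' ≤ nuQ ν Q (a * y) := by
      have := nuQ_mul_low hν hK ha hdegan hy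
      linarith
    have h3 : Q * y + a * y ≠ 0 := by
      rw [← hsplit]
      exact mul_ne_zero hy hQ'm.ne_zero
    calc nuQ ν Q y + ν Q' ≤ min (nuQ ν Q (Q * y)) (nuQ ν Q (a * y)) := le_min h1 h2
      _ ≤ nuQ ν Q (Q * y + a * y) := nuQ_add_min hν hQm hQd hQy hay h3
      _ = nuQ ν Q (y * Q') := by rw [← hsplit]

theorem nuQ_mul_key_pow {Q Q' : Polynomial K} (hν : IsVal ν) (hK : IsKeyPol ν Q)
    (hQ'm : Q'.Monic) (hdeg : Q'.natDegree = Q.natDegree) (hle : ν Q' ≤ ν Q)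
    {y : Polynomial K} (hy : y ≠ 0) (i : ℕ) :
    nuQ ν Q y + i * ν Q' ≤ nuQ ν Q (y * Q' ^ i) := by
  induction i with
  | zero => simp
  | succ i ih =>
    have hyi : y * Q' ^ i ≠ 0 := mul_ne_zero hy (pow_ne_zero _ hQ'm.ne_zero)
    have hstep := nuQ_mul_keyStep hν hK hQ'm hdeg hle hyi
    have hre : y * Q' ^ (i + 1) = (y * Q' ^ i) * Q' := by ring
    rw [hre]
    push_cast
    linarith

theorem nuQ_mono {Q Qt : Polynomial K} (hν : IsVal ν) (hK : IsKeyPol ν Q)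
    (hKt : IsKeyPol ν Qt) (hdeg : Qt.natDegree = Q.natDegree) (hle : ν Qt ≤ ν Q)
    {g : Polynomial K} (hg : g ≠ 0) :
    nuQ ν Qt g ≤ nuQ ν Q g := by
  have hQtm := hKt.1
  have hQtd := hKt.2.1
  have hexp := qc_expansion hQtm hQtd g.natDegree g le_rfl
  conv_rhs => rw [hexp]
  apply nuQ_sum_ge hν hK.1 hK.2.1 _ _ _ ?_ (by rw [← hexp]; exact hg)
  intro i _ hne
  have hqc : qc Qt g i ≠ 0 := by
    intro h0
    exact hne (by show qc Qt g i * Qt ^ i = 0; rw [h0, zero_mul])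
  show nuQ ν Qt g ≤ nuQ ν Q (qc Qt g i * Qt ^ i)
  have h1 : nuQ ν Q (qc Qt g i) + i * ν Qt ≤ nuQ ν Q (qc Qt g i * Qt ^ i) :=
    nuQ_mul_key_pow hν hK hQtm hdeg hle hqc i
  have hdq : Qt.degree = Q.degree := by
    rw [Polynomial.degree_eq_natDegree hQtm.ne_zero,
      Polynomial.degree_eq_natDegree hK.1.ne_zero, hdeg]
  have h2 : nuQ ν Q (qc Qt g i) = ν (qc Qt g i) :=
    nuQ_low hK.1 ν hqc (by rw [← hdq]; exact qc_degree hQtm g i)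
  have h3 : ν (qc Qt g i * Qt ^ i) = ν (qc Qt g i) + i * ν Qt := by
    rw [hν.1 _ _ hqc (pow_ne_zero _ hQtm.ne_zero), hν.val_pow hQtm.ne_zero]
  have h4 : nuQ ν Qt g ≤ ν (qc Qt g i * Qt ^ i) := nuQ_le hQtm hQtd ν hqc
  linarith

end CompareLemmas

/-- If `f ∈ S_α` and `h` satisfies `ν_{Q'}(h) > ν_Q(f)` for some `Q' ∈ Ψ_α` and
all `Q ∈ Ψ_α`, then `f + h ∈ S_α`. -/
theorem add_mem_Slim (ν : Polynomial K → ℝ) (hν : IsVal ν) (α : ℕ)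
    (hne : (Psi ν α).Nonempty)
    (hnomax : ∀ Q ∈ Psi ν α, ∃ Q' ∈ Psi ν α, ν Q < ν Q')
    (F : Polynomial K) (hFm : F.Monic) (hF : F ∈ Slim ν α)
    (hmin : ∀ g ∈ Slim ν α, F.natDegree ≤ g.natDegree)
    (f : Polynomial K) (hf : f ∈ Slim ν α)
    (h Q' : Polynomial K) (hQ' : Q' ∈ Psi ν α)
    (hval : ∀ Q ∈ Psi ν α, nuQ ν Q f < nuQ ν Q' h) :
    f + h ∈ Slim ν α := by
  have hQ'K : IsKeyPol ν Q' := hQ'.1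
  have hQ'd : Q'.natDegree = α := hQ'.2
  have hf0 : f ≠ 0 := hf.1
  have hfS : ∀ Q ∈ Psi ν α, nuQ ν Q f < ν f := hf.2
  by_cases hh0 : h = 0
  · subst hh0
    rw [add_zero]
    exact hf
  have ht0 : f + h ≠ 0 := by
    intro h0
    have hhf : h = -f := eq_neg_of_add_eq_zero_right h0
    have hlt := hval Q' hQ'
    rw [hhf, nuQ_neg hν hQ'K.1] at hlt
    exact lt_irrefl _ hlt
  refine ⟨ht0, ?_⟩
  intro Q hQmem
  have hQK : IsKeyPol ν Q := hQmem.1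
  have hQd : Q.natDegree = α := hQmem.2
  have hνfh : min (ν f) (ν h) ≤ ν (f + h) := hν.2 f h hf0 hh0 ht0
  have hh_le : nuQ ν Q' h ≤ ν h := nuQ_le_val hν hQ'K.1 hQ'K.2.1 hh0
  rcases le_or_gt (ν Q') (ν Q) with hcase | hcase
  · have hmono : nuQ ν Q' h ≤ nuQ ν Q h :=
      nuQ_mono hν hQK hQ'K (by rw [hQ'd, hQd]) hcase hh0
    have hlt : nuQ ν Q f < nuQ ν Q h := lt_of_lt_of_le (hval Q hQmem) hmono
    obtain ⟨-, heq⟩ := nuQ_add_lt hν hQK.1 hQK.2.1 hf0 hh0 hlt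
    rw [heq]
    have h1 : nuQ ν Q f < ν f := hfS Q hQmem
    have h2 : nuQ ν Q f < ν h := lt_of_lt_of_le (hval Q hQmem) hh_le
    exact lt_of_lt_of_le (lt_min h1 h2) hνfh
  · have hmono : nuQ ν Q (f + h) ≤ nuQ ν Q' (f + h) :=
      nuQ_mono hν hQ'K hQK (by rw [hQ'd, hQd]) hcase.le ht0
    have hlt' : nuQ ν Q' f < nuQ ν Q' h := hval Q' hQ'
    obtain ⟨-, heq'⟩ := nuQ_add_lt hν hQ'K.1 hQ'K.2.1 hf0 hh0 hlt'
    rw [heq'] at hmono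
    have h1 : nuQ ν Q' f < ν f := hfS Q' hQ'
    have h2 : nuQ ν Q' f < ν h := lt_of_lt_of_le hlt' hh_le
    exact lt_of_le_of_lt hmono (lt_of_lt_of_le (lt_min h1 h2) hνfh)
end
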